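/- arXiv:1109.5426 — 6 statements merged into one kernel-verified Lean document; each statement's English description precedes it below -/
import Mathlib

section
/- Let {r_k}_{k∈ℤ} be an absolutely summable sequence of complex numbers with r_{-k} = conj(r_k) for all k, let f(ω) := Σ_{k=-∞}^{∞} r_k e^{-ιkω}, and for each n let Σ_n be the n×n Hermitian Toeplitz matrix with (i,j) entry r_{i-j}. Then every eigenvalue of Σ_n lies in the interval [min_{ω∈[0,2π]} f(ω), max_{ω∈[0,2π]} f(ω)]. -/
/-!
Put `c(ω) = ∑_q w_q e^{-iqω}`. Orthogonality of the characters `e^{imω}` on `[0, 2π]`, together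
with termwise integration of the absolutely convergent series for `f`, gives
`∫ f |c|² = 2π ⟨w, Σ_n w⟩` and `∫ |c|² = 2π ‖w‖²`. For a unit eigenvector `w`, the eigenvalue is
therefore the average of `f` against the probability density `|c|² / 2π`, so it lies between the
minimum and the maximum of `f`.
-/

open Complex Set MeasureTheory Matrix

lemma integral_exp_I_int_mul (m : ℤ) :
    ∫ ω in (0:ℝ)..2 * Real.pi, exp (I * m * ω) =
      if m = 0 then ((2 * Real.pi : ℝ) : ℂ) else 0 := by
  split_ifs with hm
  · simp [hm]
  have hc : I * m ≠ 0 := mul_ne_zero I_ne_zero (Int.cast_ne_zero.mpr hm)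
  have hperiod : exp (I * m * (2 * Real.pi : ℝ)) = 1 := by
    rw [← exp_int_mul_two_pi_mul_I m]
    push_cast
    ring_nf
  simp only [integral_exp_mul_complex hc, hperiod]
  simp

lemma continuous_tsum_mul_exp {r : ℤ → ℂ} (hsum : Summable fun k => ‖r k‖) :
    Continuous fun ω : ℝ => ∑' k : ℤ, r k * exp (-I * k * ω) :=
  continuous_tsum (fun k => by fun_prop) hsum fun k ω => by simp [norm_exp]

lemma integral_tsum_mul_exp_mul_exp {r : ℤ → ℂ} (hsum : Summable fun k => ‖r k‖) (j : ℤ) :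
    ∫ ω in (0:ℝ)..2 * Real.pi, (∑' k : ℤ, r k * exp (-I * k * ω)) * exp (I * j * ω) =
      2 * Real.pi * r j := by
  have hterm : ∀ k, ∫ ω in (0:ℝ)..2 * Real.pi, r k * exp (-I * k * ω) * exp (I * j * ω) =
      if k = j then 2 * Real.pi * r j else 0 := by
    intro k
    have hexp : ∀ ω : ℝ, r k * exp (-I * k * ω) * exp (I * j * ω) =
        r k * exp (I * ((j - k : ℤ) : ℂ) * ω) := by
      intro ω
      rw [mul_assoc, ← exp_add]
      push_cast
      ring_nf
    simp only [hexp, intervalIntegral.integral_const_mul, integral_exp_I_int_mul, sub_eq_zero,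
      eq_comm (a := j)]
    split_ifs with h
    · subst h; push_cast; ring
    · simp
  have hsummable : ∀ ω : ℝ, Summable fun k : ℤ => r k * exp (-I * k * ω) := fun ω =>
    hsum.of_norm_bounded fun k => by simp [norm_exp]
  have hsum_integral : HasSum
      (fun k => ∫ ω in (0:ℝ)..2 * Real.pi, r k * exp (-I * k * ω) * exp (I * j * ω))
      (∫ ω in (0:ℝ)..2 * Real.pi, (∑' k : ℤ, r k * exp (-I * k * ω)) * exp (I * j * ω)) :=
    intervalIntegral.hasSum_integral_of_dominated_convergence (fun k _ => ‖r k‖)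
      (fun k => by fun_prop) (fun k => ae_of_all _ fun ω _ => by simp [norm_exp])
      (ae_of_all _ fun _ _ => hsum) intervalIntegrable_const
      (ae_of_all _ fun ω _ => (hsummable ω).hasSum.mul_right _)
  simp only [hterm] at hsum_integral
  exact hsum_integral.unique (hasSum_ite_eq j _)

noncomputable def trigPoly {n : ℕ} (w : Fin n → ℂ) (ω : ℝ) : ℂ :=
  ∑ q : Fin n, w q * exp (-I * (q : ℤ) * ω)

section trigPoly

variable {n : ℕ} (w : Fin n → ℂ)

lemma continuous_trigPoly : Continuous (trigPoly w) := by
  unfold trigPoly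
  fun_prop

lemma ofReal_norm_trigPoly_sq (ω : ℝ) :
    ((‖trigPoly w ω‖ ^ 2 : ℝ) : ℂ) =
      ∑ p : Fin n, ∑ q : Fin n, starRingEnd ℂ (w p) * w q * exp (I * ((p - q : ℤ) : ℂ) * ω) := by
  rw [ofReal_pow, ← conj_mul', trigPoly, map_sum, Finset.sum_mul_sum]
  refine Finset.sum_congr rfl fun p _ => Finset.sum_congr rfl fun q _ => ?_
  have hconj : starRingEnd ℂ (-I * ((p : ℤ) : ℂ) * ω) = I * ((p : ℤ) : ℂ) * ω := by simp
  rw [map_mul, ← exp_conj, hconj]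
  calc _ = starRingEnd ℂ (w p) * w q *
        (exp (I * ((p : ℤ) : ℂ) * ω) * exp (-I * ((q : ℤ) : ℂ) * ω)) := by ring
    _ = _ := by
      rw [← exp_add]
      push_cast
      ring_nf

lemma integral_mul_norm_trigPoly_sq {g : ℝ → ℂ} (hg : Continuous g) (a b : ℝ) :
    ∫ ω in a..b, g ω * (‖trigPoly w ω‖ ^ 2 : ℝ) =
      ∑ p : Fin n, ∑ q : Fin n,
        starRingEnd ℂ (w p) * w q * ∫ ω in a..b, g ω * exp (I * ((p - q : ℤ) : ℂ) * ω) := by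
  simp only [ofReal_norm_trigPoly_sq, Finset.mul_sum]
  rw [intervalIntegral.integral_finsetSum fun p _ =>
    (by fun_prop : Continuous _).intervalIntegrable _ _]
  refine Finset.sum_congr rfl fun p _ => ?_
  rw [intervalIntegral.integral_finsetSum fun q _ =>
    (by fun_prop : Continuous _).intervalIntegrable _ _]
  refine Finset.sum_congr rfl fun q _ => ?_
  rw [← intervalIntegral.integral_const_mul]
  congr 1 with ω
  ring

lemma integral_tsum_mul_norm_trigPoly_sq {r : ℤ → ℂ} (hsum : Summable fun k => ‖r k‖)
    {T : Matrix (Fin n) (Fin n) ℂ} (hT : ∀ i j : Fin n, T i j = r ((i : ℤ) - (j : ℤ))) :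
    ∫ ω in (0:ℝ)..2 * Real.pi, (∑' k : ℤ, r k * exp (-I * k * ω)) * (‖trigPoly w ω‖ ^ 2 : ℝ) =
      2 * Real.pi * (star w ⬝ᵥ T *ᵥ w) := by
  simp only [integral_mul_norm_trigPoly_sq w (continuous_tsum_mul_exp hsum),
    integral_tsum_mul_exp_mul_exp hsum, dotProduct, mulVec, hT, Finset.mul_sum, Pi.star_apply,
    RCLike.star_def]
  refine Finset.sum_congr rfl fun p _ => Finset.sum_congr rfl fun q _ => ?_
  ring

lemma integral_norm_trigPoly_sq :
    ∫ ω in (0:ℝ)..2 * Real.pi, ‖trigPoly w ω‖ ^ 2 = 2 * Real.pi * ∑ p : Fin n, ‖w p‖ ^ 2 := by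
  have h := integral_mul_norm_trigPoly_sq w (g := fun _ => 1) continuous_const 0 (2 * Real.pi)
  simp only [one_mul, integral_exp_I_int_mul, intervalIntegral.integral_ofReal, sub_eq_zero,
    Nat.cast_inj, Fin.val_inj, mul_ite, mul_zero, Finset.sum_ite_eq, Finset.mem_univ, if_true,
    conj_mul', ← Finset.sum_mul] at h
  rw [mul_comm (2 * Real.pi)]
  exact_mod_cast h

end trigPoly

lemma mem_Icc_sInf_sSup_of_integral_mul_eq {f φ : ℝ → ℝ} {a b μ : ℝ} (hab : a ≤ b)
    (hf : ContinuousOn f (Icc a b)) (hφ : ContinuousOn φ (Icc a b))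
    (hφ_nonneg : ∀ x ∈ Icc a b, 0 ≤ φ x) (hφ_pos : 0 < ∫ x in a..b, φ x)
    (hμ : ∫ x in a..b, f x * φ x = μ * ∫ x in a..b, φ x) :
    μ ∈ Icc (sInf (f '' Icc a b)) (sSup (f '' Icc a b)) := by
  have hbdd := isCompact_Icc.image_of_continuousOn hf
  rw [← uIcc_of_le hab] at hf hφ
  have hφ_int := hφ.intervalIntegrable (μ := volume)
  have hfφ_int := (hf.mul hφ).intervalIntegrable (μ := volume)
  constructor
  · refine le_of_mul_le_mul_right ?_ hφ_pos
    rw [← hμ, ← intervalIntegral.integral_const_mul]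
    exact intervalIntegral.integral_mono_on hab (hφ_int.const_mul _) hfφ_int fun x hx =>
      mul_le_mul_of_nonneg_right (csInf_le hbdd.bddBelow (mem_image_of_mem f hx)) (hφ_nonneg x hx)
  · refine le_of_mul_le_mul_right ?_ hφ_pos
    rw [← hμ, ← intervalIntegral.integral_const_mul]
    exact intervalIntegral.integral_mono_on hab hfφ_int (hφ_int.const_mul _) fun x hx =>
      mul_le_mul_of_nonneg_right (le_csSup hbdd.bddAbove (mem_image_of_mem f hx)) (hφ_nonneg x hx)

theorem toeplitz_eigenvalue_range_general
    (r : ℤ → ℂ) (hsum : Summable fun k => ‖r k‖)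
    (f : ℝ → ℝ)
    (hf : ∀ ω : ℝ, (f ω : ℂ) = ∑' k : ℤ, r k * Complex.exp (-Complex.I * (k : ℂ) * (ω : ℂ)))
    (T : (n : ℕ) → Matrix (Fin n) (Fin n) ℂ)
    (hT : ∀ (n : ℕ) (i j : Fin n), T n i j = r ((i : ℤ) - (j : ℤ)))
    (hHerm : ∀ n : ℕ, (T n).IsHermitian) :
    ∀ (n : ℕ) (i : Fin n),
      (hHerm n).eigenvalues i ∈
        Set.Icc (sInf (f '' Set.Icc (0:ℝ) (2 * Real.pi)))
                (sSup (f '' Set.Icc (0:ℝ) (2 * Real.pi))) := by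
  intro n i
  set w := (hHerm n).eigenvectorBasis i
  have hf_re : f = fun ω : ℝ => (∑' k : ℤ, r k * exp (-I * k * ω)).re :=
    funext fun ω => by rw [← hf, ofReal_re]
  have hf_cont : Continuous f := hf_re ▸ continuous_re.comp (continuous_tsum_mul_exp hsum)
  have hweight : ∫ ω in (0:ℝ)..2 * Real.pi, ‖trigPoly w ω‖ ^ 2 = 2 * Real.pi := by
    rw [integral_norm_trigPoly_sq, ← EuclideanSpace.norm_sq_eq,
      (hHerm n).eigenvectorBasis.orthonormal.1 i, one_pow, mul_one]
  have hquad : ∫ ω in (0:ℝ)..2 * Real.pi, f ω * ‖trigPoly w ω‖ ^ 2 =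
      2 * Real.pi * (hHerm n).eigenvalues i := by
    have h := congrArg re (integral_tsum_mul_norm_trigPoly_sq w hsum (hT n))
    simp only [← hf, ← ofReal_mul, intervalIntegral.integral_ofReal, ofReal_re] at h
    rw [(hHerm n).eigenvalues_eq, h]
    simp [w]
  exact mem_Icc_sInf_sSup_of_integral_mul_eq (φ := fun ω => ‖trigPoly w ω‖ ^ 2)
    Real.two_pi_pos.le hf_cont.continuousOn
    ((continuous_trigPoly w).norm.pow 2).continuousOn (fun _ _ => by positivity)
    (by rw [hweight]; exact Real.two_pi_pos) (by rw [hquad, hweight, mul_comm])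

/-- Every eigenvalue of the Hermitian Toeplitz matrix built from an absolutely
summable autocovariance sequence lies between the minimum and the maximum of the
spectrum `f` over `[0, 2π]`. -/
theorem toeplitz_eigenvalue_range
    (r : ℤ → ℂ) (hsum : Summable fun k => ‖r k‖)
    (hconj : ∀ k : ℤ, r (-k) = starRingEnd ℂ (r k))
    (f : ℝ → ℝ)
    (hf : ∀ ω : ℝ, (f ω : ℂ) = ∑' k : ℤ, r k * Complex.exp (-Complex.I * (k : ℂ) * (ω : ℂ)))
    (T : (n : ℕ) → Matrix (Fin n) (Fin n) ℂ)
    (hT : ∀ (n : ℕ) (i j : Fin n), T n i j = r ((i : ℤ) - (j : ℤ)))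
    (hHerm : ∀ n : ℕ, (T n).IsHermitian) :
    ∀ (n : ℕ) (i : Fin n),
      (hHerm n).eigenvalues i ∈
        Set.Icc (sInf (f '' Set.Icc (0:ℝ) (2 * Real.pi)))
                (sSup (f '' Set.Icc (0:ℝ) (2 * Real.pi))) :=
  toeplitz_eigenvalue_range_general r hsum f hf T hT hHerm
end

section
/- Let {r_k}_{k∈ℤ} be an absolutely summable sequence of complex numbers with r_{-k} = conj(r_k), let f(ω) := Σ_{k=-∞}^{∞} r_k e^{-ιkω}, and for each n let Σ_n be the n×n Hermitian Toeplitz matrix with (i,j) entry r_{i-j}, with eigenvalues ζ_1^{(n)},…,ζ_n^{(n)}, and let ξ_i^{(n)} := f(2π(i-1)/n) for i = 1,…,n be the n uniform samples of f. Then for every continuous function g : ℝ → ℝ, lim_{n→∞} (1/n) | Σ_{i=1}^n g(ζ_i^{(n)}) − Σ_{i=1}^n g(ξ_i^{(n)}) | = 0. -/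
/-!
Let `C_n = F_n diag(ξ⁽ⁿ⁾) F_n⁻¹` be the matrix obtained by conjugating the diagonal matrix of the
samples with the discrete Fourier matrix. Orthogonality of the `n`-th roots of unity shows that
`C_n` is the circulant matrix with entries `∑_{k ≡ i - j [ZMOD n]} r_k`, so it differs from `Σ_n`
only through coefficients `r_k` that wrap around, each of them in at most `min(n, 2|k|)` entries;
by dominated convergence the entrywise `ℓ¹` norm of `Σ_n - C_n` is `o(n)`. Both matrices have
absolute row sums at most `M = ∑ |r_k|`, so `|tr Σ_nᵐ - tr C_nᵐ| ≤ m Mᵐ⁻¹ ‖Σ_n - C_n‖₁`: the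
normalised power sums of the eigenvalues and of the samples have the same limit behaviour. All
these numbers lie in `[-M, M]`, and Weierstrass approximation passes from powers to continuous `g`.
-/

open Filter Topology Complex
open scoped Real

section Moments

open Polynomial

variable {x y : (n : ℕ) → Fin n → ℝ}

lemma tendsto_sum_eval_sub_of_tendsto_sum_pow_sub
    (h : ∀ m : ℕ, Tendsto (fun n : ℕ => 1 / (n : ℝ) * (∑ i, x n i ^ m - ∑ i, y n i ^ m))
      atTop (𝓝 0))
    (p : ℝ[X]) :
    Tendsto (fun n : ℕ => 1 / (n : ℝ) * (∑ i, p.eval (x n i) - ∑ i, p.eval (y n i)))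
      atTop (𝓝 0) := by
  induction p using Polynomial.induction_on' with
  | add p q hp hq =>
    simpa only [eval_add, Finset.sum_add_distrib, add_sub_add_comm, mul_add, add_zero]
      using hp.add hq
  | monomial m a =>
    simpa only [eval_monomial, ← Finset.mul_sum, ← mul_sub, mul_left_comm _ a, mul_zero]
      using (h m).const_mul a

lemma inv_mul_abs_sum_sub_sum_le {n : ℕ} {u v : Fin n → ℝ} {δ : ℝ} (hδ : 0 ≤ δ)
    (h : ∀ i, |u i - v i| ≤ δ) :
    1 / (n : ℝ) * |∑ i, u i - ∑ i, v i| ≤ δ := by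
  rcases Nat.eq_zero_or_pos n with rfl | hn
  · simpa using hδ
  rw [← Finset.sum_sub_distrib, one_div_mul_eq_div, div_le_iff₀ (by positivity)]
  calc |∑ i, (u i - v i)| ≤ ∑ i, |u i - v i| := Finset.abs_sum_le_sum_abs _ _
    _ ≤ ∑ _i : Fin n, δ := Finset.sum_le_sum fun i _ => h i
    _ = δ * n := by simp [mul_comm]

lemma tendsto_sum_comp_sub_of_tendsto_sum_pow_sub {a b : ℝ}
    (hx : ∀ n i, x n i ∈ Set.Icc a b) (hy : ∀ n i, y n i ∈ Set.Icc a b)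
    (h : ∀ m : ℕ, Tendsto (fun n : ℕ => 1 / (n : ℝ) * (∑ i, x n i ^ m - ∑ i, y n i ^ m))
      atTop (𝓝 0))
    {g : ℝ → ℝ} (hg : ContinuousOn g (Set.Icc a b)) :
    Tendsto (fun n : ℕ => 1 / (n : ℝ) * |∑ i, g (x n i) - ∑ i, g (y n i)|) atTop (𝓝 0) := by
  rw [Metric.tendsto_atTop]
  intro ε hε
  obtain ⟨p, hp⟩ := exists_polynomial_near_of_continuousOn a b g hg (ε / 3) (by positivity)
  have hgp : ∀ z ∈ Set.Icc a b, |g z - p.eval z| ≤ ε / 3 := fun z hz => by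
    rw [abs_sub_comm]; exact (hp z hz).le
  obtain ⟨N, hN⟩ := Metric.tendsto_atTop.1
    (tendsto_sum_eval_sub_of_tendsto_sum_pow_sub h p) (ε / 3) (by positivity)
  refine ⟨N, fun n hn => ?_⟩
  have hpoly := hN n hn
  rw [Real.dist_eq, sub_zero, abs_mul, abs_of_nonneg (by positivity)] at hpoly
  rw [Real.dist_eq, sub_zero, abs_of_nonneg (by positivity)]
  set G := ∑ i, g (x n i)
  set G' := ∑ i, g (y n i)
  set P := ∑ i, p.eval (x n i)
  set P' := ∑ i, p.eval (y n i)
  have hG : 1 / (n : ℝ) * |G - P| ≤ ε / 3 :=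
    inv_mul_abs_sum_sub_sum_le (by positivity) fun i => hgp _ (hx n i)
  have hG' : 1 / (n : ℝ) * |P' - G'| ≤ ε / 3 :=
    inv_mul_abs_sum_sub_sum_le (by positivity) fun i => by
      rw [abs_sub_comm]; exact hgp _ (hy n i)
  calc 1 / (n : ℝ) * |G - G'| ≤ 1 / (n : ℝ) * (|G - P| + |P - P'| + |P' - G'|) := by
        gcongr
        exact (abs_sub_le _ P' _).trans (add_le_add_left (abs_sub_le _ _ _) _)
    _ < ε / 3 + ε / 3 + ε / 3 := by linarith
    _ = ε := by ring

end Moments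

namespace Matrix

-- `‖A‖` is the `ℓ∞` operator norm of `A`, its largest absolute row sum.
attribute [local instance] Matrix.linftyOpNormedAddCommGroup Matrix.linftyOpNormedRing

variable {m n α : Type*} [Fintype m] [Fintype n]

def l1Norm [Norm α] (A : Matrix m n α) : ℝ := ∑ i, ∑ j, ‖A i j‖

lemma l1Norm_nonneg [NormedAddCommGroup α] (A : Matrix m n α) : 0 ≤ l1Norm A := by
  unfold l1Norm; positivity

section NormedAddCommGroup

variable [NormedAddCommGroup α]

lemma sum_norm_le_linfty_opNorm (A : Matrix m n α) (i : m) : ∑ j, ‖A i j‖ ≤ ‖A‖ := by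
  have := NNReal.coe_le_coe.2 (Finset.le_sup (f := fun i => ∑ j, ‖A i j‖₊) (Finset.mem_univ i))
  simpa [linfty_opNorm_def] using this

lemma norm_apply_le_linfty_opNorm (A : Matrix m n α) (i : m) (j : n) : ‖A i j‖ ≤ ‖A‖ :=
  (Finset.single_le_sum (fun j _ => norm_nonneg (A i j)) (Finset.mem_univ j)).trans
    (sum_norm_le_linfty_opNorm A i)

lemma linfty_opNorm_le_of_sum_norm_le {A : Matrix m n α} {M : ℝ} (hM : 0 ≤ M)
    (h : ∀ i, ∑ j, ‖A i j‖ ≤ M) : ‖A‖ ≤ M := by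
  lift M to NNReal using hM
  rw [linfty_opNorm_def, NNReal.coe_le_coe]
  exact Finset.sup_le fun i _ => by simpa [← NNReal.coe_le_coe] using h i

end NormedAddCommGroup

lemma norm_mul_pow_le [NormedRing α] [DecidableEq n] (P A : Matrix n n α) (k : ℕ) :
    ‖P * A ^ k‖ ≤ ‖P‖ * ‖A‖ ^ k := by
  induction k with
  | zero => simp
  | succ k ih =>
    rw [pow_succ, ← mul_assoc, pow_succ, ← mul_assoc]
    exact (norm_mul_le _ _).trans (by gcongr)

lemma norm_trace_mul_le [NormedRing α] (P : Matrix m n α) (X : Matrix n m α) :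
    ‖trace (P * X)‖ ≤ ‖P‖ * l1Norm X := by
  calc ‖trace (P * X)‖ ≤ ∑ i, ∑ j, ‖P i j‖ * ‖X j i‖ := by
        refine (norm_sum_le _ _).trans (Finset.sum_le_sum fun i _ => ?_)
        exact (norm_sum_le _ _).trans (Finset.sum_le_sum fun j _ => norm_mul_le _ _)
    _ ≤ ∑ i, ∑ j, ‖P‖ * ‖X j i‖ := by
        gcongr with i _ j _
        exact norm_apply_le_linfty_opNorm P i j
    _ = ‖P‖ * l1Norm X := by
        rw [l1Norm, Finset.sum_comm, Finset.mul_sum]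
        simp_rw [Finset.mul_sum]

section NormedCommRing

variable [NormedCommRing α] [DecidableEq n]

lemma norm_trace_mul_pow_sub_pow_le {A B : Matrix n n α} {M : ℝ} (hA : ‖A‖ ≤ M) (hB : ‖B‖ ≤ M)
    (P : Matrix n n α) (k : ℕ) :
    ‖trace (P * (A ^ k - B ^ k))‖ ≤ k * M ^ (k - 1) * ‖P‖ * l1Norm (A - B) := by
  induction k generalizing P with
  | zero => simp
  | succ k ih =>
    have hM : 0 ≤ M := (norm_nonneg A).trans hA
    have hsplit : trace (P * (A ^ (k + 1) - B ^ (k + 1)))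
        = trace (P * A ^ k * (A - B)) + trace (B * P * (A ^ k - B ^ k)) := by
      rw [mul_assoc B, trace_mul_comm B, ← trace_add, pow_succ, pow_succ]
      congr 1
      noncomm_ring
    have h₁ : ‖trace (P * A ^ k * (A - B))‖ ≤ M ^ k * ‖P‖ * l1Norm (A - B) := by
      refine (norm_trace_mul_le _ _).trans (mul_le_mul_of_nonneg_right ?_ (l1Norm_nonneg _))
      exact (norm_mul_pow_le P A k).trans (by rw [mul_comm]; gcongr)
    have h₂ : ‖trace (B * P * (A ^ k - B ^ k))‖ ≤ k * M ^ (k - 1) * (M * ‖P‖) * l1Norm (A - B) :=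
      (ih _).trans <| mul_le_mul_of_nonneg_right
        (by gcongr; exact (norm_mul_le B P).trans (by gcongr)) (l1Norm_nonneg _)
    have hpow : (k : ℝ) * M ^ (k - 1) * M = k * M ^ k := by
      rcases k with _ | k
      · simp
      · rw [mul_assoc, ← pow_succ, Nat.add_sub_cancel]
    rw [hsplit]
    refine (norm_add_le _ _).trans ((add_le_add h₁ h₂).trans_eq ?_)
    push_cast
    linear_combination (‖P‖ * l1Norm (A - B)) * hpow

lemma norm_trace_pow_sub_pow_le [NormOneClass α] {A B : Matrix n n α} {M : ℝ}
    (hA : ‖A‖ ≤ M) (hB : ‖B‖ ≤ M) (k : ℕ) :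
    ‖trace (A ^ k - B ^ k)‖ ≤ k * M ^ (k - 1) * l1Norm (A - B) := by
  have hone : ‖(1 : Matrix n n α)‖ ≤ 1 := by
    rw [← diagonal_one, linfty_opNorm_diagonal]
    exact (pi_norm_const_le (1 : α)).trans_eq norm_one
  have hM : 0 ≤ M := (norm_nonneg A).trans hA
  refine (one_mul (A ^ k - B ^ k) ▸ norm_trace_mul_pow_sub_pow_le hA hB 1 k).trans ?_
  calc (k : ℝ) * M ^ (k - 1) * ‖(1 : Matrix n n α)‖ * l1Norm (A - B)
      ≤ k * M ^ (k - 1) * 1 * l1Norm (A - B) := by gcongr; exact l1Norm_nonneg _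
    _ = k * M ^ (k - 1) * l1Norm (A - B) := by ring

end NormedCommRing

lemma trace_units_conj_pow [CommRing α] [DecidableEq n] (u : (Matrix n n α)ˣ) (D : Matrix n n α)
    (k : ℕ) :
    trace (((u : Matrix n n α) * D * (↑u⁻¹ : Matrix n n α)) ^ k) = trace (D ^ k) := by
  rw [Units.conj_pow, trace_mul_cycle, Units.inv_mul, one_mul]

namespace IsHermitian

variable [DecidableEq n] {𝕜 : Type*} [RCLike 𝕜] {A : Matrix n n 𝕜}

lemma trace_pow (hA : A.IsHermitian) (k : ℕ) :
    trace (A ^ k) = ∑ i, (hA.eigenvalues i : 𝕜) ^ k := by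
  conv_lhs => rw [hA.spectral_theorem]
  rw [← map_pow, Unitary.conjStarAlgAut_apply, trace_mul_cycle,
    Unitary.coe_star_mul_self, one_mul, diagonal_pow, trace_diagonal]
  rfl

lemma abs_eigenvalues_le_linfty_opNorm (hA : A.IsHermitian) (i : n) :
    |hA.eigenvalues i| ≤ ‖A‖ := by
  set v : n → 𝕜 := ⇑(hA.eigenvectorBasis i)
  have hv : 0 < ‖v‖ := norm_pos_iff.2 <|
    (WithLp.ofLp_eq_zero 2).ne.2 (hA.eigenvectorBasis.orthonormal.ne_zero i)
  refine le_of_mul_le_mul_right ?_ hv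
  calc |hA.eigenvalues i| * ‖v‖ = ‖A *ᵥ v‖ := by
        rw [hA.mulVec_eigenvectorBasis, norm_smul, Real.norm_eq_abs]
    _ ≤ ‖A‖ * ‖v‖ := linfty_opNorm_mulVec A v

end IsHermitian

end Matrix

lemma IsPrimitiveRoot.sum_zpow_mul {K : Type*} [Field K] {ζ : K} {n : ℕ}
    (hζ : IsPrimitiveRoot ζ n) (c : ℤ) :
    ∑ t : Fin n, ζ ^ (c * t) = if (n : ℤ) ∣ c then (n : K) else 0 := by
  rcases Nat.eq_zero_or_pos n with rfl | hn
  · simp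
  have hpow : ∀ t : Fin n, ζ ^ (c * t) = (ζ ^ c) ^ (t : ℕ) := fun t => by
    rw [zpow_mul, zpow_natCast]
  simp_rw [hpow, Fin.sum_univ_eq_sum_range (fun t => (ζ ^ c) ^ t)]
  split_ifs with hc
  · simp [(hζ.zpow_eq_one_iff_dvd c).2 hc]
  · have hne : ζ ^ c - 1 ≠ 0 := sub_ne_zero.2 fun h => hc ((hζ.zpow_eq_one_iff_dvd c).1 h)
    have hroot : (ζ ^ c) ^ n = 1 := by
      rw [← zpow_natCast, ← zpow_mul, mul_comm, zpow_mul, zpow_natCast, hζ.pow_eq_one, one_zpow]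
    exact (mul_eq_zero.1 ((geom_sum_mul _ n).trans (sub_eq_zero.2 hroot))).resolve_right hne

lemma Fin.natCast_dvd_sub_iff {n : ℕ} (i j : Fin n) : (n : ℤ) ∣ (i : ℤ) - j ↔ i = j := by
  refine ⟨fun h => ?_, fun h => by simp [h]⟩
  have := Int.eq_zero_of_abs_lt_dvd h (Int.abs_sub_lt_of_lt_lt j.isLt i.isLt)
  exact Fin.ext (by omega)

noncomputable def dft (n : ℕ) : Matrix (Fin n) (Fin n) ℂ :=
  Matrix.of fun i j => exp (2 * π * I / n) ^ ((i : ℤ) * j)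

noncomputable def dftInv (n : ℕ) : Matrix (Fin n) (Fin n) ℂ :=
  Matrix.of fun i j => (n : ℂ)⁻¹ * exp (2 * π * I / n) ^ (-((i : ℤ) * j))

lemma dftInv_mul_dft (n : ℕ) : dftInv n * dft n = 1 := by
  rcases Nat.eq_zero_or_pos n with rfl | hn
  · exact Subsingleton.elim _ _
  have hζ := isPrimitiveRoot_exp n hn.ne'
  ext i j
  have hterm : ∀ t : Fin n, dftInv n i t * dft n t j
      = (n : ℂ)⁻¹ * exp (2 * π * I / n) ^ (((j : ℤ) - i) * t) := fun t => by
    rw [dftInv, dft, Matrix.of_apply, Matrix.of_apply, mul_assoc, ← zpow_add₀ (hζ.ne_zero hn.ne')]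
    ring_nf
  rw [Matrix.mul_apply, Finset.sum_congr rfl fun t _ => hterm t, ← Finset.mul_sum, hζ.sum_zpow_mul,
    Matrix.one_apply]
  simp only [Fin.natCast_dvd_sub_iff, eq_comm (a := j)]
  split_ifs <;> simp [hn.ne']

noncomputable def dftUnit (n : ℕ) : (Matrix (Fin n) (Fin n) ℂ)ˣ :=
  ⟨dft n, dftInv n, mul_eq_one_comm.1 (dftInv_mul_dft n), dftInv_mul_dft n⟩

noncomputable def circulantOfSamples (f : ℝ → ℝ) (n : ℕ) : Matrix (Fin n) (Fin n) ℂ :=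
  (dftUnit n : Matrix (Fin n) (Fin n) ℂ)
    * Matrix.diagonal (fun t : Fin n => (f (2 * π * (t : ℝ) / n) : ℂ))
    * (↑(dftUnit n)⁻¹ : Matrix (Fin n) (Fin n) ℂ)

lemma trace_circulantOfSamples_pow (f : ℝ → ℝ) (n k : ℕ) :
    Matrix.trace (circulantOfSamples f n ^ k) = ∑ t : Fin n, (f (2 * π * (t : ℝ) / n) : ℂ) ^ k := by
  rw [circulantOfSamples, Matrix.trace_units_conj_pow, Matrix.diagonal_pow, Matrix.trace_diagonal]
  rfl

lemma sum_norm_tsum_ite_le {ι β E : Type*} [Fintype ι] [NormedAddCommGroup E] {r : β → E}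
    (hr : Summable (‖r ·‖)) (P : ι → β → Prop) [∀ i k, Decidable (P i k)] :
    ∑ i, ‖∑' k, if P i k then r k else 0‖
      ≤ ∑' k, ((Finset.univ.filter fun i => P i k).card : ℝ) * ‖r k‖ := by
  have hs : ∀ i, Summable fun k => ‖if P i k then r k else 0‖ := fun i =>
    hr.of_nonneg_of_le (fun _ => norm_nonneg _) fun k => by split_ifs <;> simp
  calc ∑ i, ‖∑' k, if P i k then r k else 0‖
      ≤ ∑ i, ∑' k, ‖if P i k then r k else 0‖ :=
        Finset.sum_le_sum fun i _ => norm_tsum_le_tsum_norm (hs i)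
    _ = ∑' k, ∑ i, ‖if P i k then r k else 0‖ := (Summable.tsum_finsetSum fun i _ => hs i).symm
    _ = ∑' k, ((Finset.univ.filter fun i => P i k).card : ℝ) * ‖r k‖ := by
        congr 1 with k
        simp [apply_ite, Finset.sum_ite]

lemma sum_norm_tsum_ite_le_tsum_norm {ι β E : Type*} [Fintype ι] [NormedAddCommGroup E]
    {r : β → E} (hr : Summable (‖r ·‖)) (P : ι → β → Prop) [∀ i k, Decidable (P i k)]
    (hP : ∀ k, (Finset.univ.filter fun i => P i k).card ≤ 1) :
    ∑ i, ‖∑' k, if P i k then r k else 0‖ ≤ ∑' k, ‖r k‖ := by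
  have hle : ∀ k, ((Finset.univ.filter fun i => P i k).card : ℝ) * ‖r k‖ ≤ ‖r k‖ := fun k =>
    mul_le_of_le_one_left (norm_nonneg _) (by exact_mod_cast hP k)
  exact (sum_norm_tsum_ite_le hr P).trans <|
    Summable.tsum_le_tsum hle (hr.of_nonneg_of_le (fun _ => by positivity) hle) hr

-- The entries `(i, j)` of the circulant `C_n` that contain `r k` although `i - j ≠ k`.
def wrapSet (n : ℕ) (k : ℤ) : Finset (Fin n × Fin n) :=
  Finset.univ.filter fun p => (n : ℤ) ∣ p.1 - p.2 - k ∧ (p.1 : ℤ) - p.2 ≠ k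

lemma mem_wrapSet {n : ℕ} {k : ℤ} {p : Fin n × Fin n} :
    p ∈ wrapSet n k ↔ (n : ℤ) ∣ p.1 - p.2 - k ∧ (p.1 : ℤ) - p.2 ≠ k := by
  simp [wrapSet]

lemma injOn_fst_wrapSet (n : ℕ) (k : ℤ) :
    Set.InjOn Prod.fst (wrapSet n k : Set (Fin n × Fin n)) := by
  rintro ⟨i, j⟩ hp ⟨i', j'⟩ hq (rfl : i = i')
  rw [Finset.mem_coe, mem_wrapSet] at hp hq
  dsimp only at hp hq
  have h := dvd_sub hp.1 hq.1
  rw [show (i : ℤ) - j - k - (i - j' - k) = j' - j by ring, Fin.natCast_dvd_sub_iff] at h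
  rw [h]

lemma card_wrapSet_le (n : ℕ) (k : ℤ) : (wrapSet n k).card ≤ n := by
  simpa using Finset.card_le_card_of_injOn Prod.fst (fun _ _ => Finset.mem_univ _)
    (injOn_fst_wrapSet n k)

lemma card_wrapSet_le_two_mul_natAbs (n : ℕ) (k : ℤ) : (wrapSet n k).card ≤ 2 * k.natAbs := by
  have hmaps : Set.MapsTo (fun p : Fin n × Fin n => (p.1 : ℕ)) (wrapSet n k : Set (Fin n × Fin n))
      (Finset.range k.natAbs ∪ Finset.Ico (n - k.natAbs) n : Finset ℕ) := by
    rintro ⟨i, j⟩ hp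
    rw [Finset.mem_coe, mem_wrapSet] at hp
    dsimp only at hp ⊢
    obtain ⟨⟨s, hs⟩, hne⟩ := hp
    have hs0 : s ≠ 0 := by rintro rfl; exact hne (by rwa [mul_zero, sub_eq_zero] at hs)
    have hi := i.isLt; have hj := j.isLt
    simp only [Finset.coe_union, Finset.coe_range, Finset.coe_Ico, Set.mem_union, Set.mem_Iio,
      Set.mem_Ico]
    rcases lt_or_gt_of_ne hs0 with h | h
    · have : (n : ℤ) * s ≤ -n := by nlinarith
      omega
    · have : (n : ℤ) ≤ n * s := by nlinarith
      omega
  calc (wrapSet n k).card ≤ (Finset.range k.natAbs ∪ Finset.Ico (n - k.natAbs) n).card :=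
        Finset.card_le_card_of_injOn _ hmaps (Fin.val_injective.comp_injOn (injOn_fst_wrapSet n k))
    _ ≤ k.natAbs + (n - (n - k.natAbs)) := by
        simpa using Finset.card_union_le (Finset.range k.natAbs) (Finset.Ico (n - k.natAbs) n)
    _ ≤ 2 * k.natAbs := by omega

section Toeplitz

noncomputable def toeplitz (r : ℤ → ℂ) (n : ℕ) : Matrix (Fin n) (Fin n) ℂ :=
  Matrix.of fun i j => r ((i : ℤ) - (j : ℤ))

attribute [local instance] Matrix.linftyOpNormedAddCommGroup Matrix.linftyOpNormedRing

variable {r : ℤ → ℂ} (hr : Summable (‖r ·‖)) {f : ℝ → ℝ}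
  (hf : ∀ ω : ℝ, (f ω : ℂ) = ∑' k : ℤ, r k * exp (-I * k * ω))

lemma toeplitz_apply_eq_tsum (n : ℕ) (i j : Fin n) :
    toeplitz r n i j = ∑' k, if (i : ℤ) - j = k then r k else 0 := by
  rw [tsum_eq_single ((i : ℤ) - j) fun _ hk => if_neg (Ne.symm hk), if_pos rfl]
  rfl

include hr

lemma linfty_opNorm_toeplitz_le (n : ℕ) : ‖toeplitz r n‖ ≤ ∑' k, ‖r k‖ := by
  refine Matrix.linfty_opNorm_le_of_sum_norm_le (tsum_nonneg fun _ => norm_nonneg _) fun i => ?_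
  simp_rw [toeplitz_apply_eq_tsum]
  refine sum_norm_tsum_ite_le_tsum_norm hr _ fun k => Finset.card_le_one.2 fun a ha b hb => ?_
  simp only [Finset.mem_filter, Finset.mem_univ, true_and] at ha hb
  exact Fin.ext (by omega)

include hf

lemma circulantOfSamples_apply {n : ℕ} (hn : n ≠ 0) (i j : Fin n) :
    circulantOfSamples f n i j = ∑' k, if (n : ℤ) ∣ i - j - k then r k else 0 := by
  set ζ := exp (2 * π * I / n)
  have hζ : IsPrimitiveRoot ζ n := isPrimitiveRoot_exp n hn
  have hsample : ∀ t : Fin n, (f (2 * π * (t : ℝ) / n) : ℂ) = ∑' k : ℤ, r k * ζ ^ (-(k * t)) :=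
    fun t => by
      rw [hf]
      congr 1 with k
      rw [← exp_int_mul]
      congr 1
      push_cast
      field_simp
  have hsummable : ∀ (c : ℤ → ℤ), Summable fun k => (n : ℂ)⁻¹ * r k * ζ ^ c k := fun c => by
    refine Summable.of_norm ?_
    simp_rw [norm_mul, norm_zpow, hζ.norm'_eq_one hn, one_zpow, mul_one]
    exact hr.mul_left _
  calc circulantOfSamples f n i j
      = ∑ t : Fin n, ∑' k : ℤ, (n : ℂ)⁻¹ * r k * ζ ^ (((i : ℤ) - j - k) * t) := by
        rw [circulantOfSamples, Matrix.mul_apply]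
        refine Finset.sum_congr rfl fun t _ => ?_
        rw [Matrix.mul_diagonal, hsample, ← tsum_mul_left, ← tsum_mul_right]
        congr 1 with k
        simp only [dftUnit, Units.inv_mk, Units.val_mk, dft, dftInv, Matrix.of_apply]
        change ζ ^ _ * (r k * ζ ^ _) * ((n : ℂ)⁻¹ * ζ ^ _) = _
        rw [show ((i : ℤ) - j - k) * t = i * t + -(k * t) + -(t * j) by ring,
          zpow_add₀ (hζ.ne_zero hn), zpow_add₀ (hζ.ne_zero hn)]
        ring
    _ = ∑' k : ℤ, r k * ((n : ℂ)⁻¹ * ∑ t : Fin n, ζ ^ (((i : ℤ) - j - k) * t)) := by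
        rw [← Summable.tsum_finsetSum fun t _ => hsummable _]
        congr 1 with k
        rw [Finset.mul_sum, Finset.mul_sum]
        exact Finset.sum_congr rfl fun t _ => by ring
    _ = ∑' k, if (n : ℤ) ∣ i - j - k then r k else 0 := by
        congr 1 with k
        rw [hζ.sum_zpow_mul]
        split_ifs <;> simp [hn]

lemma linfty_opNorm_circulantOfSamples_le (n : ℕ) : ‖circulantOfSamples f n‖ ≤ ∑' k, ‖r k‖ := by
  refine Matrix.linfty_opNorm_le_of_sum_norm_le (tsum_nonneg fun _ => norm_nonneg _) fun i => ?_
  simp_rw [circulantOfSamples_apply hr hf (Fin.pos i).ne']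
  refine sum_norm_tsum_ite_le_tsum_norm hr _ fun k => Finset.card_le_one.2 fun a ha b hb => ?_
  simp only [Finset.mem_filter, Finset.mem_univ, true_and] at ha hb
  have h := dvd_sub hb ha
  rwa [show (i : ℤ) - b - k - (i - a - k) = a - b by ring, Fin.natCast_dvd_sub_iff] at h

lemma l1Norm_toeplitz_sub_circulantOfSamples_le (n : ℕ) :
    Matrix.l1Norm (toeplitz r n - circulantOfSamples f n) ≤ ∑' k, (wrapSet n k).card * ‖r k‖ := by
  have hsummable : ∀ P : ℤ → Prop, [DecidablePred P] → Summable fun k => if P k then r k else 0 :=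
    fun P _ => Summable.of_norm_bounded hr fun k => by split_ifs <;> simp
  have hentry : ∀ p : Fin n × Fin n, ‖(toeplitz r n - circulantOfSamples f n) p.1 p.2‖
      = ‖∑' k, if (n : ℤ) ∣ p.1 - p.2 - k ∧ (p.1 : ℤ) - p.2 ≠ k then r k else 0‖ := by
    rintro ⟨i, j⟩
    rw [Matrix.sub_apply, norm_sub_rev, toeplitz_apply_eq_tsum,
      circulantOfSamples_apply hr hf (Fin.pos i).ne', ← (hsummable _).tsum_sub (hsummable _)]
    congr 2 with k
    by_cases hk : (i : ℤ) - j = k <;> simp [hk]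
  calc Matrix.l1Norm (toeplitz r n - circulantOfSamples f n)
      = ∑ p : Fin n × Fin n, ‖(toeplitz r n - circulantOfSamples f n) p.1 p.2‖ :=
        (Fintype.sum_prod_type' _).symm
    _ ≤ ∑' k, (wrapSet n k).card * ‖r k‖ := by
        simp_rw [hentry]
        exact sum_norm_tsum_ite_le hr _

lemma tendsto_inv_mul_l1Norm_toeplitz_sub_circulantOfSamples :
    Tendsto (fun n : ℕ => 1 / (n : ℝ) * Matrix.l1Norm (toeplitz r n - circulantOfSamples f n))
      atTop (𝓝 0) := by
  have hcoeff : ∀ k, Tendsto (fun n : ℕ => (wrapSet n k).card / (n : ℝ) * ‖r k‖) atTop (𝓝 0) :=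
    fun k => by
      have hlim := (tendsto_const_div_atTop_nhds_zero_nat (2 * k.natAbs : ℝ)).mul_const ‖r k‖
      rw [zero_mul] at hlim
      refine squeeze_zero (fun n => by positivity) (fun n => ?_) hlim
      gcongr
      exact_mod_cast card_wrapSet_le_two_mul_natAbs n k
  have hbound : ∀ n : ℕ, ∀ k, ‖(wrapSet n k).card / (n : ℝ) * ‖r k‖‖ ≤ ‖r k‖ := fun n k => by
    rw [norm_mul, norm_norm, Real.norm_of_nonneg (by positivity)]
    exact mul_le_of_le_one_left (norm_nonneg _)
      (div_le_one_of_le₀ (by exact_mod_cast card_wrapSet_le n k) n.cast_nonneg)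
  have hsum := tendsto_tsum_of_dominated_convergence hr hcoeff (Eventually.of_forall hbound)
  rw [tsum_zero] at hsum
  refine squeeze_zero (fun n => by unfold Matrix.l1Norm; positivity) (fun n => ?_) hsum
  calc 1 / (n : ℝ) * Matrix.l1Norm (toeplitz r n - circulantOfSamples f n)
      ≤ 1 / (n : ℝ) * ∑' k, (wrapSet n k).card * ‖r k‖ := by
        gcongr
        exact l1Norm_toeplitz_sub_circulantOfSamples_le hr hf n
    _ = ∑' k, (wrapSet n k).card / (n : ℝ) * ‖r k‖ := by
        rw [← tsum_mul_left]
        congr 1 with k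
        ring

lemma tendsto_inv_mul_sum_eigenvalues_pow_sub_sum_samples_pow
    (hHerm : ∀ n, (toeplitz r n).IsHermitian) (m : ℕ) :
    Tendsto (fun n : ℕ => 1 / (n : ℝ) * (∑ i, (hHerm n).eigenvalues i ^ m
      - ∑ i : Fin n, f (2 * π * (i : ℝ) / n) ^ m)) atTop (𝓝 0) := by
  set M := ∑' k, ‖r k‖
  have hlim := (tendsto_inv_mul_l1Norm_toeplitz_sub_circulantOfSamples hr hf).const_mul
    ((m : ℝ) * M ^ (m - 1))
  rw [mul_zero] at hlim
  refine squeeze_zero_norm (fun n => ?_) hlim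
  have htrace : ((∑ i, (hHerm n).eigenvalues i ^ m - ∑ i : Fin n, f (2 * π * (i : ℝ) / n) ^ m
      : ℝ) : ℂ) = Matrix.trace (toeplitz r n ^ m - circulantOfSamples f n ^ m) := by
    rw [Matrix.trace_sub, (hHerm n).trace_pow, trace_circulantOfSamples_pow]
    push_cast
    rfl
  rw [norm_mul, Real.norm_of_nonneg (by positivity), ← Complex.norm_real, htrace, mul_left_comm]
  gcongr
  exact Matrix.norm_trace_pow_sub_pow_le (linfty_opNorm_toeplitz_le hr n)
    (linfty_opNorm_circulantOfSamples_le hr hf n) m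

lemma abs_symbol_le_tsum_norm (ω : ℝ) : |f ω| ≤ ∑' k, ‖r k‖ := by
  have hnorm : ∀ k : ℤ, ‖r k * exp (-I * k * ω)‖ = ‖r k‖ := fun k => by
    simp [Complex.norm_exp]
  rw [← Real.norm_eq_abs, ← Complex.norm_real, hf]
  exact (norm_tsum_le_tsum_norm (by simpa only [hnorm] using hr)).trans_eq (tsum_congr hnorm)

end Toeplitz

open Filter Matrix

theorem toeplitz_eigenvalues_vs_uniform_samples_general
    (r : ℤ → ℂ) (hsum : Summable fun k => ‖r k‖)
    (f : ℝ → ℝ)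
    (hf : ∀ ω : ℝ, (f ω : ℂ) = ∑' k : ℤ, r k * Complex.exp (-Complex.I * (k : ℂ) * (ω : ℂ)))
    (T : (n : ℕ) → Matrix (Fin n) (Fin n) ℂ)
    (hT : ∀ (n : ℕ) (i j : Fin n), T n i j = r ((i : ℤ) - (j : ℤ)))
    (hHerm : ∀ n : ℕ, (T n).IsHermitian)
    (g : ℝ → ℝ) (hg : Continuous g) :
    Tendsto
      (fun n : ℕ => (1 / (n : ℝ)) *
        |(∑ i : Fin n, g ((hHerm n).eigenvalues i)) -
          ∑ i : Fin n, g (f (2 * Real.pi * (i : ℝ) / (n : ℝ)))|)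
      atTop (nhds 0) := by
  obtain rfl : T = toeplitz r := funext fun n => Matrix.ext (hT n)
  set M := ∑' k, ‖r k‖
  have heig : ∀ n i, (hHerm n).eigenvalues i ∈ Set.Icc (-M) M := fun n i =>
    abs_le.1 <| ((hHerm n).abs_eigenvalues_le_linfty_opNorm i).trans
      (linfty_opNorm_toeplitz_le hsum n)
  have hsample : ∀ n (i : Fin n), f (2 * π * (i : ℝ) / n) ∈ Set.Icc (-M) M := fun _ _ =>
    abs_le.1 (abs_symbol_le_tsum_norm hsum hf _)
  exact tendsto_sum_comp_sub_of_tendsto_sum_pow_sub heig hsample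
    (tendsto_inv_mul_sum_eigenvalues_pow_sub_sum_samples_pow hsum hf hHerm) hg.continuousOn

/-- The averaged difference between `g` evaluated at the Toeplitz eigenvalues and
`g` evaluated at the `n` uniform samples `ξ_i = f(2π(i-1)/n)` of the spectrum
vanishes as `n → ∞`, for every continuous `g`. -/
theorem toeplitz_eigenvalues_vs_uniform_samples
    (r : ℤ → ℂ) (hsum : Summable fun k => ‖r k‖)
    (hconj : ∀ k : ℤ, r (-k) = starRingEnd ℂ (r k))
    (f : ℝ → ℝ)
    (hf : ∀ ω : ℝ, (f ω : ℂ) = ∑' k : ℤ, r k * Complex.exp (-Complex.I * (k : ℂ) * (ω : ℂ)))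
    (T : (n : ℕ) → Matrix (Fin n) (Fin n) ℂ)
    (hT : ∀ (n : ℕ) (i j : Fin n), T n i j = r ((i : ℤ) - (j : ℤ)))
    (hHerm : ∀ n : ℕ, (T n).IsHermitian)
    (g : ℝ → ℝ) (hg : Continuous g) :
    Tendsto
      (fun n : ℕ => (1 / (n : ℝ)) *
        |(∑ i : Fin n, g ((hHerm n).eigenvalues i)) -
          ∑ i : Fin n, g (f (2 * Real.pi * (i : ℝ) / (n : ℝ)))|)
      atTop (nhds 0) :=
  toeplitz_eigenvalues_vs_uniform_samples_general r hsum f hf T hT hHerm g hg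
end

section
/- Fix real numbers a, b, σ > 0, P > 0, γ > 0. For each positive integer n define F_n := max{ (1/2n) Σ_{i=1}^n log(1 + (μ_i/σ²)·|1+abλ_i|²/(1+b²|λ_i|²)) : μ ∈ ℝⁿ, λ ∈ ℂⁿ, μ_i ≥ 0 for all i, Σ_{i=1}^n μ_i ≤ nP, Σ_{i=1}^n (a²μ_i + σ²)|λ_i|² ≤ nγP }. Then the sequence (nF_n) is superadditive, i.e., (m+n)F_{m+n} ≥ mF_m + nF_n for all m, n ≥ 1, the sequence (F_n) is bounded above, and consequently lim_{n→∞} F_n exists and equals sup_{n≥1} F_n. -/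
/-!
Concatenating a feasible allocation over `m` bins with one over `n` bins gives a feasible
allocation over `m + n` bins whose total rate is the sum of the two, so `n * Fₙ` is
superadditive. Each bin contributes at most `(1 + a²) μᵢ / σ²` (by `log (1 + t) ≤ t` and
Cauchy–Schwarz `|1 + ab λ|² ≤ (1 + a²)(1 + b²|λ|²)`), so the power budget bounds `Fₙ`.
Fekete's lemma applied to `-n Fₙ` then gives convergence to the supremum.
-/

open Filter Set Topology

theorem tendsto_sSup_of_mul_superadditive {F : ℕ → ℝ}
    (hsuper : ∀ m n : ℕ, 1 ≤ m → 1 ≤ n →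
      (m : ℝ) * F m + (n : ℝ) * F n ≤ ((m + n : ℕ) : ℝ) * F (m + n))
    {B : ℝ} (hB : ∀ n : ℕ, 1 ≤ n → F n ≤ B) :
    Tendsto F atTop (𝓝 (sSup (F '' Ici 1))) := by
  set u : ℕ → ℝ := fun n => -((n : ℝ) * F n)
  have hu : Subadditive u := by
    intro m n
    rcases Nat.eq_zero_or_pos m with rfl | hm
    · simp [u]
    rcases Nat.eq_zero_or_pos n with rfl | hn
    · simp [u]
    simp only [u]
    linarith [hsuper m n hm hn]
  have hdiv : ∀ n : ℕ, 1 ≤ n → u n / n = -F n := fun n hn => by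
    have : (n : ℝ) ≠ 0 := by positivity
    simp only [u]
    field_simp
  have hbdd : BddBelow (range fun n : ℕ => u n / n) := by
    refine ⟨-max B 0, ?_⟩
    rintro _ ⟨n, rfl⟩
    rcases Nat.eq_zero_or_pos n with rfl | hn
    · simp
    · simp only [hdiv n hn, neg_le_neg_iff]
      exact (hB n hn).trans (le_max_left B 0)
  have hlim : hu.lim = -sSup (F '' Ici 1) := by
    rw [Subadditive.lim, image_congr fun n (hn : n ∈ Ici 1) => hdiv n hn, ← Real.sInf_neg,
      ← image_neg_eq_neg, image_image]
  have htendsto := (hu.tendsto_lim hbdd).neg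
  rw [hlim, neg_neg] at htendsto
  refine htendsto.congr' ?_
  filter_upwards [eventually_ge_atTop 1] with n hn
  rw [hdiv n hn, neg_neg]

theorem mul_csSup_add_mul_csSup_le {s t : Set ℝ} (hs : s.Nonempty) (ht : t.Nonempty)
    {p q c : ℝ} (hp : 0 ≤ p) (hq : 0 ≤ q) (h : ∀ x ∈ s, ∀ y ∈ t, p * x + q * y ≤ c) :
    p * sSup s + q * sSup t ≤ c := by
  rw [← smul_eq_mul, ← smul_eq_mul, ← Real.sSup_smul_of_nonneg hp,
    ← Real.sSup_smul_of_nonneg hq, ← le_sub_iff_add_le]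
  refine csSup_le hs.smul_set ?_
  rintro _ ⟨x, hx, rfl⟩
  rw [le_sub_comm]
  refine csSup_le ht.smul_set ?_
  rintro _ ⟨y, hy, rfl⟩
  simp only [smul_eq_mul]
  linarith [h x hx y hy]

theorem norm_one_add_ofReal_mul_mul_sq_le (a b : ℝ) (z : ℂ) :
    ‖1 + ((a * b : ℝ) : ℂ) * z‖ ^ 2 ≤ (1 + a ^ 2) * (1 + b ^ 2 * ‖z‖ ^ 2) := by
  set t := |b| * ‖z‖
  have hnorm : ‖1 + ((a * b : ℝ) : ℂ) * z‖ ≤ 1 + |a| * t := by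
    calc ‖1 + ((a * b : ℝ) : ℂ) * z‖ ≤ ‖(1 : ℂ)‖ + ‖((a * b : ℝ) : ℂ) * z‖ := norm_add_le _ _
      _ = 1 + |a| * t := by
        rw [norm_mul, Complex.norm_real, Real.norm_eq_abs, abs_mul, norm_one, mul_assoc]
  have ht : t ^ 2 = b ^ 2 * ‖z‖ ^ 2 := by rw [mul_pow, sq_abs]
  calc ‖1 + ((a * b : ℝ) : ℂ) * z‖ ^ 2 ≤ (1 + |a| * t) ^ 2 := by gcongr
    _ ≤ (1 + a ^ 2) * (1 + t ^ 2) := by nlinarith [sq_nonneg (|a| - t), sq_abs a]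
    _ = (1 + a ^ 2) * (1 + b ^ 2 * ‖z‖ ^ 2) := by rw [ht]

section LTIRelay

variable (a b σ P γ : ℝ)

noncomputable def ltiBinRate (μ : ℝ) (z : ℂ) : ℝ :=
  Real.log (1 + (μ / σ ^ 2) * ‖1 + ((a * b : ℝ) : ℂ) * z‖ ^ 2 / (1 + b ^ 2 * ‖z‖ ^ 2))

def ltiRateSet (n : ℕ) : Set ℝ :=
  {x : ℝ | ∃ (μ : Fin n → ℝ) (l : Fin n → ℂ),
    (∀ i, 0 ≤ μ i) ∧ (∑ i, μ i ≤ (n : ℝ) * P) ∧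
    (∑ i, (a ^ 2 * μ i + σ ^ 2) * ‖l i‖ ^ 2 ≤ (n : ℝ) * γ * P) ∧
    x = (1 / (2 * (n : ℝ))) * ∑ i, ltiBinRate a b σ (μ i) (l i)}

variable {a b σ P γ}

theorem ltiBinRate_le {μ : ℝ} (hμ : 0 ≤ μ) (z : ℂ) :
    ltiBinRate a b σ μ z ≤ (1 + a ^ 2) / σ ^ 2 * μ := by
  have hD : 0 < 1 + b ^ 2 * ‖z‖ ^ 2 := by positivity
  calc ltiBinRate a b σ μ z
      ≤ (μ / σ ^ 2) * ‖1 + ((a * b : ℝ) : ℂ) * z‖ ^ 2 / (1 + b ^ 2 * ‖z‖ ^ 2) :=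
        (Real.log_le_sub_one_of_pos (by positivity)).trans_eq (add_sub_cancel_left _ _)
    _ ≤ (μ / σ ^ 2) * (1 + a ^ 2) := by
        rw [mul_div_assoc]
        gcongr
        exact div_le_of_le_mul₀ hD.le (by positivity)
          (norm_one_add_ofReal_mul_mul_sq_le a b z)
    _ = (1 + a ^ 2) / σ ^ 2 * μ := by ring

theorem zero_mem_ltiRateSet (hP : 0 ≤ P) (hγ : 0 ≤ γ) (n : ℕ) :
    (0 : ℝ) ∈ ltiRateSet a b σ P γ n :=
  ⟨0, 0, fun _ => le_rfl, by simp; positivity, by simp; positivity, by simp [ltiBinRate]⟩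

theorem le_of_mem_ltiRateSet {n : ℕ} (hn : 0 < n) {x : ℝ} (hx : x ∈ ltiRateSet a b σ P γ n) :
    x ≤ (1 + a ^ 2) * P / (2 * σ ^ 2) := by
  obtain ⟨μ, l, hμ, hsum, -, rfl⟩ := hx
  have hn' : (0 : ℝ) < n := by exact_mod_cast hn
  calc (1 / (2 * (n : ℝ))) * ∑ i, ltiBinRate a b σ (μ i) (l i)
      ≤ (1 / (2 * (n : ℝ))) * ((1 + a ^ 2) / σ ^ 2 * ∑ i, μ i) := by
        gcongr
        rw [Finset.mul_sum]
        exact Finset.sum_le_sum fun i _ => ltiBinRate_le (hμ i) (l i)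
    _ ≤ (1 / (2 * (n : ℝ))) * ((1 + a ^ 2) / σ ^ 2 * ((n : ℝ) * P)) := by gcongr
    _ = (1 + a ^ 2) * P / (2 * σ ^ 2) := by field_simp

theorem div_mem_ltiRateSet_add {m n : ℕ} (hm : 0 < m) (hn : 0 < n) {x y : ℝ}
    (hx : x ∈ ltiRateSet a b σ P γ m) (hy : y ∈ ltiRateSet a b σ P γ n) :
    ((m : ℝ) * x + (n : ℝ) * y) / ((m : ℝ) + (n : ℝ)) ∈ ltiRateSet a b σ P γ (m + n) := by
  obtain ⟨μ₁, l₁, hμ₁, hs₁, hr₁, rfl⟩ := hx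
  obtain ⟨μ₂, l₂, hμ₂, hs₂, hr₂, rfl⟩ := hy
  have hm' : (m : ℝ) ≠ 0 := by positivity
  have hn' : (n : ℝ) ≠ 0 := by positivity
  refine ⟨Fin.append μ₁ μ₂, Fin.append l₁ l₂, Fin.addCases (by simpa) (by simpa), ?_, ?_, ?_⟩
  all_goals
    simp only [Fin.sum_univ_add, Fin.append_left, Fin.append_right]
    push_cast
  · linarith
  · linarith
  · field_simp

end LTIRelay

theorem lti_rate_superadditive_limit_general (a b σ P γ : ℝ) (hP : 0 < P)
    (hγ : 0 < γ) (F : ℕ → ℝ)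
    (hF : ∀ n : ℕ, 0 < n → F n = sSup {x : ℝ | ∃ (μ : Fin n → ℝ) (l : Fin n → ℂ),
      (∀ i, 0 ≤ μ i) ∧ (∑ i, μ i ≤ (n : ℝ) * P) ∧
      (∑ i, (a ^ 2 * μ i + σ ^ 2) * ‖l i‖ ^ 2 ≤ (n : ℝ) * γ * P) ∧
      x = (1 / (2 * (n : ℝ))) * ∑ i, Real.log
        (1 + (μ i / σ ^ 2) * ‖1 + ((a * b : ℝ) : ℂ) * l i‖ ^ 2
          / (1 + b ^ 2 * ‖l i‖ ^ 2))}) :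
    (∀ m n : ℕ, 1 ≤ m → 1 ≤ n →
      (m : ℝ) * F m + (n : ℝ) * F n ≤ ((m + n : ℕ) : ℝ) * F (m + n)) ∧
    (∃ B : ℝ, ∀ n : ℕ, 1 ≤ n → F n ≤ B) ∧
    Tendsto F atTop (nhds (sSup {x : ℝ | ∃ n : ℕ, 1 ≤ n ∧ x = F n})) := by
  have hS : ∀ n : ℕ, 0 < n → F n = sSup (ltiRateSet a b σ P γ n) := hF
  have hne (n : ℕ) : (ltiRateSet a b σ P γ n).Nonempty := ⟨0, zero_mem_ltiRateSet hP.le hγ.le n⟩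
  have hbdd : ∀ n : ℕ, 0 < n → BddAbove (ltiRateSet a b σ P γ n) :=
    fun n hn => ⟨_, fun _ => le_of_mem_ltiRateSet hn⟩
  have hB : ∀ n : ℕ, 1 ≤ n → F n ≤ (1 + a ^ 2) * P / (2 * σ ^ 2) := fun n hn => by
    rw [hS n hn]
    exact csSup_le (hne n) fun _ => le_of_mem_ltiRateSet hn
  have hsuper : ∀ m n : ℕ, 1 ≤ m → 1 ≤ n →
      (m : ℝ) * F m + (n : ℝ) * F n ≤ ((m + n : ℕ) : ℝ) * F (m + n) := by
    intro m n hm hn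
    rw [hS m hm, hS n hn]
    refine mul_csSup_add_mul_csSup_le (hne m) (hne n) (by positivity) (by positivity)
      fun x hx y hy => ?_
    have hmn : (0 : ℝ) < m + n := by positivity
    rw [hS (m + n) (by omega), Nat.cast_add, ← div_le_iff₀' hmn]
    exact le_csSup (hbdd (m + n) (by omega)) (div_mem_ltiRateSet_add hm hn hx hy)
  have himage : {x : ℝ | ∃ n : ℕ, 1 ≤ n ∧ x = F n} = F '' Ici 1 := by
    ext; simp [eq_comm]
  exact ⟨hsuper, ⟨_, hB⟩, himage ▸ tendsto_sSup_of_mul_superadditive hsuper hB⟩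

/-- The sequence `n·Fₙ` of scaled maximum LTI relaying rates is superadditive,
`Fₙ` is bounded above, and hence `Fₙ` converges to its supremum over `n ≥ 1`. -/
theorem lti_rate_superadditive_limit (a b σ P γ : ℝ) (hσ : 0 < σ) (hP : 0 < P)
    (hγ : 0 < γ) (F : ℕ → ℝ)
    (hF : ∀ n : ℕ, 0 < n → F n = sSup {x : ℝ | ∃ (μ : Fin n → ℝ) (l : Fin n → ℂ),
      (∀ i, 0 ≤ μ i) ∧ (∑ i, μ i ≤ (n : ℝ) * P) ∧
      (∑ i, (a ^ 2 * μ i + σ ^ 2) * ‖l i‖ ^ 2 ≤ (n : ℝ) * γ * P) ∧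
      x = (1 / (2 * (n : ℝ))) * ∑ i, Real.log
        (1 + (μ i / σ ^ 2) * ‖1 + ((a * b : ℝ) : ℂ) * l i‖ ^ 2
          / (1 + b ^ 2 * ‖l i‖ ^ 2))}) :
    (∀ m n : ℕ, 1 ≤ m → 1 ≤ n →
      (m : ℝ) * F m + (n : ℝ) * F n ≤ ((m + n : ℕ) : ℝ) * F (m + n)) ∧
    (∃ B : ℝ, ∀ n : ℕ, 1 ≤ n → F n ≤ B) ∧
    Tendsto F atTop (nhds (sSup {x : ℝ | ∃ n : ℕ, 1 ≤ n ∧ x = F n})) :=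
  lti_rate_superadditive_limit_general a b σ P γ hP hγ F hF
end

section
/- Fix real numbers a, b with ab ≠ 0 and σ > 0, P > 0, γ > 0. For every positive integer n, the maximization of (1/2n) Σ_{i=1}^n log(1 + (μ_i/σ²)·|1+abλ_i|²/(1+b²|λ_i|²)) over μ ∈ ℝⁿ, λ ∈ ℂⁿ subject to μ_i ≥ 0 for all i, Σ_{i=1}^n μ_i ≤ nP, and Σ_{i=1}^n (a²μ_i + σ²)|λ_i|² ≤ nγP admits a maximizer (μ*, λ*) such that the set of values {λ*_1, …, λ*_n} has at most 50 elements, at most 49 of which are nonzero, and such that μ*_i = μ*_j whenever λ*_i = λ*_j. -/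
/-!
Aligning the phase of every relay gain `λ_k` with `ab` can only increase the rate, so it suffices
to consider real gains `x_k = |λ_k| ≥ 0`, with per-bin rate `log (1 + μ_k w(x_k))` where
`w(x) = (1 + |ab| x)² / (σ² (1 + b² x²))`. In the coordinates `(μ_k, q_k)`, where
`q_k = (a² μ_k + σ²) x_k²` is the relay power spent on bin `k`, both constraints are budgets, so at
a maximizer (which exists by compactness) the marginal rates with respect to `q` and to `μ` take
common values `ν` and `η` on all active bins. Eliminating `μ` from these two stationarity
equations leaves a polynomial equation of degree 7 in `x` with leading coefficient
`-σ² ν² a⁴ b⁴` (or `x = |ab| / b²` when `ν = 0`), so the nonzero gains take at most 7 values.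
Finally, averaging `μ` over the bins that share a gain keeps both budgets and, the rate being
concave in `μ`, does not decrease the objective.
-/

open Real Finset Topology

section Budget

variable {ι : Type*} [Fintype ι]

def budgetSet (C : ℝ) : Set (ι → ℝ) := {w | 0 ≤ w ∧ ∑ k, w k ≤ C}

theorem isCompact_budgetSet (C : ℝ) : IsCompact (budgetSet (ι := ι) C) := by
  refine Metric.isCompact_of_isClosed_isBounded ?_ ((Metric.isBounded_Icc 0 fun _ => C).subset ?_)
  · exact (isClosed_le continuous_const continuous_id).inter
      (isClosed_le (continuous_finsetSum _ fun k _ => continuous_apply k) continuous_const)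
  · rintro w ⟨hw, hwC⟩
    exact ⟨hw, fun k => (single_le_sum (fun j _ => hw j) (mem_univ k)).trans hwC⟩

theorem eventually_add_smul_mem_budgetSet [DecidableEq ι] {C : ℝ} {w : ι → ℝ}
    (hw : w ∈ budgetSet C) {i j : ι} (hi : 0 < w i) (hj : 0 < w j) :
    ∀ᶠ t in 𝓝 (0 : ℝ), w + t • (Pi.single i 1 - Pi.single j 1) ∈ budgetSet C := by
  filter_upwards [Ioo_mem_nhds (neg_lt_zero.2 (lt_min hi hj)) (lt_min hi hj)] with t ⟨ht, ht'⟩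
  refine ⟨fun k => ?_, ?_⟩
  · have hk : 0 ≤ w k := hw.1 k
    have := min_le_left (w i) (w j)
    have := min_le_right (w i) (w j)
    simp only [Pi.add_apply, Pi.smul_apply, Pi.sub_apply, Pi.single_apply, smul_eq_mul,
      Pi.zero_apply]
    split_ifs <;> subst_vars <;> linarith
  · simpa [sum_add_distrib, ← mul_sum] using hw.2

theorem IsMaxOn.hasDerivAt_eq_of_budgetSet {C : ℝ} {F : ι → ℝ → ℝ} {v : ι → ℝ}
    (hv : v ∈ budgetSet C) (hmax : IsMaxOn (fun w => ∑ k, F k (w k)) (budgetSet C) v)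
    {i j : ι} (hi : 0 < v i) (hj : 0 < v j) {di dj : ℝ}
    (hdi : HasDerivAt (F i) di (v i)) (hdj : HasDerivAt (F j) dj (v j)) : di = dj := by
  classical
  rcases eq_or_ne i j with rfl | hij
  · exact hdi.unique hdj
  have hsum : ∀ t : ℝ, ∑ k, F k ((v + t • (Pi.single i 1 - Pi.single j 1) : ι → ℝ) k) =
      ∑ k, F k (v k) + (F i (v i + t) + F j (v j - t) - (F i (v i) + F j (v j))) := by
    intro t
    rw [← sub_eq_iff_eq_add', ← sum_sub_distrib, Fintype.sum_eq_add i j hij]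
    · simp [hij, hij.symm, ← sub_eq_add_neg]
      ring
    · rintro k ⟨hki, hkj⟩
      simp [hki, hkj]
  have hloc : IsLocalMax (fun t => F i (v i + t) + F j (v j - t)) 0 := by
    filter_upwards [eventually_add_smul_mem_budgetSet hv hi hj] with t ht
    have := isMaxOn_iff.1 hmax _ ht
    rw [hsum] at this
    simpa using this
  have hd : HasDerivAt (fun t => F i (v i + t) + F j (v j - t)) (di - dj) 0 := by
    rw [sub_eq_add_neg]
    exact (HasDerivAt.comp_const_add (v i) 0 (by rwa [add_zero])).add
      (HasDerivAt.comp_const_sub (v j) 0 (by rwa [sub_zero]))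
  linarith [hloc.hasDerivAt_eq_zero hd]

end Budget

section FiberMean

variable {ι κ : Type*} [Fintype ι] [DecidableEq κ]

noncomputable def fiberMean (key : ι → κ) (μ : ι → ℝ) (y : κ) : ℝ :=
  (∑ j with key j = y, μ j) / #{j | key j = y}

theorem fiberMean_nonneg {key : ι → κ} {μ : ι → ℝ} (hμ : 0 ≤ μ) (y : κ) :
    0 ≤ fiberMean key μ y :=
  div_nonneg (sum_nonneg fun j _ => hμ j) (Nat.cast_nonneg _)

theorem sum_fiberMean_mul (key : ι → κ) (μ : ι → ℝ) (W : κ → ℝ) :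
    ∑ i, fiberMean key μ (key i) * W (key i) = ∑ i, μ i * W (key i) := by
  have hcard : ∀ i, (#{j | key j = key i} : ℝ) ≠ 0 := fun i =>
    Nat.cast_ne_zero.2 (card_ne_zero.2 ⟨i, by simp⟩)
  calc ∑ i, fiberMean key μ (key i) * W (key i)
      = ∑ i, ∑ j with key j = key i, μ j * (W (key j) / #{k | key k = key j}) := by
        refine sum_congr rfl fun i _ => ?_
        rw [fiberMean, div_mul_eq_mul_div, sum_mul, sum_div]
        refine sum_congr rfl fun j hj => ?_
        rw [(mem_filter.1 hj).2]
        ring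
    _ = ∑ j, ∑ i with key i = key j, μ j * (W (key j) / #{k | key k = key j}) :=
        sum_comm' fun i j => by simp [eq_comm]
    _ = ∑ j, μ j * W (key j) := by
        refine sum_congr rfl fun j _ => ?_
        rw [sum_const, nsmul_eq_mul]
        field_simp [hcard j]

theorem log_one_add_mul_sub_le {m m' W : ℝ} (hm : 0 ≤ m) (hm' : 0 ≤ m') (hW : 0 ≤ W) :
    log (1 + m * W) - log (1 + m' * W) ≤ (m - m') * (W / (1 + m' * W)) := by
  have h₁ : 0 < 1 + m * W := by positivity
  have h₂ : 0 < 1 + m' * W := by positivity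
  rw [← log_div h₁.ne' h₂.ne']
  refine (log_le_sub_one_of_pos (div_pos h₁ h₂)).trans_eq ?_
  field_simp
  ring

theorem sum_log_one_add_mul_le_fiberMean {key : ι → κ} {μ : ι → ℝ} {W : κ → ℝ}
    (hμ : 0 ≤ μ) (hW : ∀ y, 0 ≤ W y) :
    ∑ i, log (1 + μ i * W (key i)) ≤ ∑ i, log (1 + fiberMean key μ (key i) * W (key i)) := by
  have h := sum_le_sum fun i (_ : i ∈ univ) =>
    log_one_add_mul_sub_le (hμ i) (fiberMean_nonneg (key := key) hμ (key i)) (hW (key i))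
  have hV := sum_fiberMean_mul key μ fun y => W y / (1 + fiberMean key μ y * W y)
  simp only [sum_sub_distrib, sub_mul] at h hV
  linarith

end FiberMean

section Counting

variable {ι α : Type*} [Fintype ι] [DecidableEq α] [Zero α] {f : ι → α} {F : Finset α}

theorem card_image_le_card_add_one (hF : ∀ k, f k ≠ 0 → f k ∈ F) :
    #(image f univ) ≤ #F + 1 := by
  refine (card_le_card fun y hy => ?_).trans (card_insert_le 0 F)
  obtain ⟨k, -, rfl⟩ := mem_image.1 hy
  by_cases h : f k = 0 <;> simp [h, hF]

theorem card_filter_ne_zero_image_le (hF : ∀ k, f k ≠ 0 → f k ∈ F) :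
    #({y ∈ image f univ | y ≠ 0}) ≤ #F := by
  refine card_le_card fun y hy => ?_
  obtain ⟨hy, hy0⟩ := mem_filter.1 hy
  obtain ⟨k, -, rfl⟩ := mem_image.1 hy
  exact hF k hy0

end Counting

namespace LTIRelay

/- The bin model in real coordinates: `s = σ²`, `A = a²`, `B = b²`, `c = |ab|`; `m` is the source
power of a bin, `x ≥ 0` the modulus of its relay gain (phase-aligned with `ab`) and
`q = (A m + s) x²` the relay power it uses. -/

variable (s A B c : ℝ)

noncomputable def effectiveSNR (x : ℝ) : ℝ := (1 + c * x) ^ 2 / (s * (1 + B * x ^ 2))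

noncomputable def effectiveSNRDeriv (x : ℝ) : ℝ :=
  2 * (1 + c * x) * (c - B * x) / (s * (1 + B * x ^ 2) ^ 2)

noncomputable def binRate (m x : ℝ) : ℝ := log (1 + m * effectiveSNR s B c x)

noncomputable def relayGain (m q : ℝ) : ℝ := √(q / (A * m + s))

noncomputable def relayMarginal (m x : ℝ) : ℝ :=
  m * effectiveSNRDeriv s B c x / (2 * x * (A * m + s) * (1 + m * effectiveSNR s B c x))

noncomputable def sourceMarginal (m x : ℝ) : ℝ :=
  effectiveSNR s B c x / (1 + m * effectiveSNR s B c x) - A * x ^ 2 * relayMarginal s A B c m x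

variable {s A B c}

theorem effectiveSNR_nonneg (hs : 0 ≤ s) (hB : 0 ≤ B) (x : ℝ) : 0 ≤ effectiveSNR s B c x := by
  unfold effectiveSNR; positivity

theorem hasDerivAt_effectiveSNR (hs : 0 < s) (hB : 0 ≤ B) (x : ℝ) :
    HasDerivAt (effectiveSNR s B c) (effectiveSNRDeriv s B c x) x := by
  have hD : s * (1 + B * x ^ 2) ≠ 0 := by positivity
  have h := ((((hasDerivAt_id x).const_mul c).const_add 1).pow 2).div
    ((((hasDerivAt_id x).pow 2).const_mul B).const_add 1 |>.const_mul s) hD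
  refine h.congr_deriv ?_
  simp only [effectiveSNRDeriv, id_eq, Pi.pow_apply]
  field_simp
  ring

theorem relayGain_mul_sq (hs : 0 < s) (hA : 0 ≤ A) {m x : ℝ} (hm : 0 ≤ m) (hx : 0 ≤ x) :
    relayGain s A m ((A * m + s) * x ^ 2) = x := by
  have : A * m + s ≠ 0 := by positivity
  rw [relayGain, mul_div_cancel_left₀ _ this, sqrt_sq hx]

theorem mul_relayGain_sq (hs : 0 < s) (hA : 0 ≤ A) {m q : ℝ} (hm : 0 ≤ m) (hq : 0 ≤ q) :
    (A * m + s) * relayGain s A m q ^ 2 = q := by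
  have : 0 < A * m + s := by positivity
  rw [relayGain, sq_sqrt (by positivity), mul_div_cancel₀ _ this.ne']

theorem relayGain_pos (hs : 0 < s) (hA : 0 ≤ A) {m q : ℝ} (hm : 0 ≤ m) (hq : 0 < q) :
    0 < relayGain s A m q :=
  sqrt_pos.2 (by positivity)

theorem hasDerivAt_binRate_relayGain_right (hs : 0 < s) (hA : 0 ≤ A) (hB : 0 ≤ B) {m q : ℝ}
    (hm : 0 ≤ m) (hq : 0 < q) :
    HasDerivAt (fun t => binRate s B c m (relayGain s A m t))
      (relayMarginal s A B c m (relayGain s A m q)) q := by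
  have hx := relayGain_pos hs hA hm hq
  have hw := effectiveSNR_nonneg hs.le hB (c := c) (relayGain s A m q)
  have h := ((((hasDerivAt_effectiveSNR hs hB _).comp q
    (((hasDerivAt_id q).div_const (A * m + s)).sqrt (by positivity))).const_mul m).const_add 1).log
    (by positivity)
  refine h.congr_deriv ?_
  simp only [relayMarginal, relayGain, Function.comp, id] at hx ⊢
  field_simp

theorem hasDerivAt_binRate_relayGain_left (hs : 0 < s) (hA : 0 ≤ A) (hB : 0 ≤ B) {m q : ℝ}
    (hm : 0 ≤ m) (hq : 0 < q) :
    HasDerivAt (fun t => binRate s B c t (relayGain s A t q))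
      (sourceMarginal s A B c m (relayGain s A m q)) m := by
  have hK : 0 < A * m + s := by positivity
  have hx := relayGain_pos hs hA hm hq
  have hq' := mul_relayGain_sq hs hA hm hq.le
  have hw := effectiveSNR_nonneg hs.le hB (c := c) (relayGain s A m q)
  have hgain : HasDerivAt (fun t => q / (A * t + s)) (-(A * q) / (A * m + s) ^ 2) m := by
    refine ((hasDerivAt_const m q).div (((hasDerivAt_id m).const_mul A).add_const s)
      hK.ne').congr_deriv ?_
    simp [mul_comm]
  have h := (((hasDerivAt_id m).mul ((hasDerivAt_effectiveSNR hs hB _).comp m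
    (hgain.sqrt (by positivity)))).const_add 1).log (by simp; positivity)
  refine h.congr_deriv ?_
  simp only [sourceMarginal, relayMarginal, relayGain, Function.comp_apply, id_eq, Pi.mul_apply]
    at hx hq' hw ⊢
  set x := √(q / (A * m + s))
  rw [← hq']
  field_simp
  ring

section Elimination

open Polynomial

/- Eliminating `m` from the two equations of `stationarity_eqs_of_marginals_eq` gives this
polynomial; its last factor `1 - A + 2 c X` is `(1 + c X)² - A (1 + B X²)` reduced with
`c² = A B`, which brings the degree down to 7. -/
noncomputable def stationarityPoly (s A B c ν η : ℝ) : ℝ[X] :=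
  (C c - C B * X) * (C η + C (ν * A) * X ^ 2) *
      ((1 + C c * X) ^ 2 - C s * (1 + C B * X ^ 2) * (C η + C (ν * A) * X ^ 2)) -
    C ν * X * (1 + C c * X) * (1 + C B * X ^ 2) *
      (C A * (1 + C c * X) ^ 2 + C s * (C η + C (ν * A) * X ^ 2) * (C (1 - A) + C (2 * c) * X))

theorem natDegree_stationarityPoly {ν : ℝ} (η : ℝ) (hs : s ≠ 0) (hA : A ≠ 0) (hB : B ≠ 0)
    (hcAB : c ^ 2 = A * B) (hν : ν ≠ 0) : (stationarityPoly s A B c ν η).natDegree = 7 := by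
  unfold stationarityPoly
  compute_degree!
  rw [show B * (ν * A) * (s * B * (ν * A)) - ν * c * B * (s * (ν * A) * (2 * c))
    = -(s * ν ^ 2 * A ^ 2 * B ^ 2) by linear_combination (-2 * s * ν ^ 2 * A * B) * hcAB]
  simp [hs, hA, hB, hν]

theorem eval_stationarityPoly_eq_zero {ν η m x : ℝ} (hcAB : c ^ 2 = A * B)
    (hrelay : m * (1 + c * x) * (c - B * x) =
      ν * x * (A * m + s) * (s * (1 + B * x ^ 2) + m * (1 + c * x) ^ 2) * (1 + B * x ^ 2))
    (hsource :
      (1 + c * x) ^ 2 = (η + ν * A * x ^ 2) * (s * (1 + B * x ^ 2) + m * (1 + c * x) ^ 2)) :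
    (stationarityPoly s A B c ν η).eval x = 0 := by
  simp only [stationarityPoly, eval_sub, eval_mul, eval_add, eval_pow, eval_C, eval_X, eval_one]
  set E := η + ν * A * x ^ 2
  linear_combination (E ^ 2 * (1 + c * x)) * hrelay
    + ((c - B * x) * E - ν * x * (1 + c * x) * (1 + B * x ^ 2) * (A + E * (A * m + s))) * hsource
    + (ν * x ^ 3 * (1 + c * x) * (1 + B * x ^ 2) * s * E) * hcAB

theorem stationarity_eqs_of_marginals_eq (hs : 0 < s) (hA : 0 ≤ A) (hB : 0 ≤ B) (hc : 0 ≤ c)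
    {m x ν η : ℝ} (hm : 0 ≤ m) (hx : 0 < x)
    (hrelay : relayMarginal s A B c m x = ν) (hsource : sourceMarginal s A B c m x = η) :
    m * (1 + c * x) * (c - B * x) =
      ν * x * (A * m + s) * (s * (1 + B * x ^ 2) + m * (1 + c * x) ^ 2) * (1 + B * x ^ 2) ∧
    (1 + c * x) ^ 2 = (η + ν * A * x ^ 2) * (s * (1 + B * x ^ 2) + m * (1 + c * x) ^ 2) := by
  rw [sourceMarginal, hrelay] at hsource
  simp only [relayMarginal, effectiveSNRDeriv, effectiveSNR] at hrelay hsource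
  have : 0 < A * m + s := by positivity
  constructor
  · field_simp at hrelay
    linear_combination hrelay
  · field_simp at hsource
    linear_combination hsource

theorem exists_finset_forall_marginals_eq (hs : 0 < s) (hA : 0 < A) (hB : 0 < B) (hc : 0 ≤ c)
    (hcAB : c ^ 2 = A * B) (ν η : ℝ) :
    ∃ F : Finset ℝ, #F ≤ 7 ∧ ∀ m x, 0 < m → 0 < x →
      relayMarginal s A B c m x = ν → sourceMarginal s A B c m x = η → x ∈ F := by
  rcases eq_or_ne ν 0 with rfl | hν
  · refine ⟨{c / B}, by simp, fun m x hm hx hrelay hsource => ?_⟩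
    obtain ⟨h, -⟩ := stationarity_eqs_of_marginals_eq hs hA.le hB.le hc hm.le hx hrelay hsource
    rw [zero_mul, zero_mul, zero_mul, zero_mul, mul_eq_zero, sub_eq_zero] at h
    rw [mem_singleton, h.resolve_left (by positivity), mul_div_cancel_left₀ _ hB.ne']
  · have hdeg := natDegree_stationarityPoly η hs.ne' hA.ne' hB.ne' hcAB hν
    have hp : stationarityPoly s A B c ν η ≠ 0 := ne_zero_of_natDegree_gt (n := 0) (by omega)
    refine ⟨(stationarityPoly s A B c ν η).roots.toFinset,
      (Multiset.toFinset_card_le _).trans ((card_roots' _).trans hdeg.le),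
      fun m x hm hx hrelay hsource => ?_⟩
    obtain ⟨h₁, h₂⟩ := stationarity_eqs_of_marginals_eq hs hA.le hB.le hc hm.le hx hrelay hsource
    rw [Multiset.mem_toFinset, mem_roots hp, IsRoot.def,
      eval_stationarityPoly_eq_zero hcAB h₁ h₂]

end Elimination

section Reduced

variable {ι : Type*} [Fintype ι] {C₁ C₂ : ℝ}

noncomputable def reducedRate (s A B c : ℝ) (p : (ι → ℝ) × (ι → ℝ)) : ℝ :=
  ∑ k, binRate s B c (p.1 k) (relayGain s A (p.1 k) (p.2 k))

theorem continuousOn_reducedRate (hs : 0 < s) (hA : 0 ≤ A) (hB : 0 ≤ B) :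
    ContinuousOn (reducedRate (ι := ι) s A B c) (budgetSet C₁ ×ˢ budgetSet C₂) := by
  have hw : Continuous (effectiveSNR s B c) :=
    Continuous.div (by fun_prop) (by fun_prop) fun x => by positivity
  refine continuousOn_finsetSum _ fun k _ => ContinuousOn.log ?_ fun p hp => ?_
  · refine continuousOn_const.add (ContinuousOn.mul (by fun_prop) (hw.comp_continuousOn ?_))
    exact (ContinuousOn.div (by fun_prop) (by fun_prop) fun p hp =>
      (add_pos_of_nonneg_of_pos (mul_nonneg hA (hp.1.1 k)) hs).ne').sqrt
  · have := effectiveSNR_nonneg hs.le hB (c := c) (relayGain s A (p.1 k) (p.2 k))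
    exact (lt_add_of_pos_of_le one_pos (mul_nonneg (hp.1.1 k) this)).ne'

theorem exists_isMaxOn_reducedRate (hs : 0 < s) (hA : 0 ≤ A) (hB : 0 ≤ B) (hC₁ : 0 ≤ C₁)
    (hC₂ : 0 ≤ C₂) :
    ∃ μ ∈ budgetSet (ι := ι) C₁, ∃ q ∈ budgetSet C₂,
      IsMaxOn (reducedRate s A B c) (budgetSet C₁ ×ˢ budgetSet C₂) (μ, q) ∧
      ∀ k, μ k = 0 → q k = 0 := by
  obtain ⟨⟨μ, q₀⟩, ⟨hμ, hq₀⟩, hmax⟩ :=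
    ((isCompact_budgetSet C₁).prod (isCompact_budgetSet C₂)).exists_isMaxOn
      ⟨((0 : ι → ℝ), (0 : ι → ℝ)), ⟨le_rfl, by simpa⟩, ⟨le_rfl, by simpa⟩⟩
      (continuousOn_reducedRate (c := c) hs hA hB)
  let q : ι → ℝ := fun k => if μ k = 0 then 0 else q₀ k
  have hq : q ∈ budgetSet C₂ := by
    have hq₀k : ∀ k, 0 ≤ q₀ k := hq₀.1
    refine ⟨fun k => ?_, (sum_le_sum fun k _ => ?_).trans hq₀.2⟩ <;>
      by_cases h : μ k = 0 <;> simp [q, h, hq₀k k]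
  have heq : reducedRate s A B c (μ, q) = reducedRate s A B c (μ, q₀) :=
    sum_congr rfl fun k _ => by by_cases h : μ k = 0 <;> simp [q, h, binRate]
  exact ⟨μ, hμ, q, hq, isMaxOn_iff.2 fun p hp => (isMaxOn_iff.1 hmax p hp).trans heq.ge,
    fun k hk => if_pos hk⟩

theorem exists_marginals_eq_of_isMaxOn (hs : 0 < s) (hA : 0 ≤ A) (hB : 0 ≤ B) {μ q : ι → ℝ}
    (hμ : μ ∈ budgetSet C₁) (hq : q ∈ budgetSet C₂)
    (hmax : IsMaxOn (reducedRate s A B c) (budgetSet C₁ ×ˢ budgetSet C₂) (μ, q)) :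
    ∃ ν η : ℝ, ∀ k, 0 < μ k → 0 < q k →
      relayMarginal s A B c (μ k) (relayGain s A (μ k) (q k)) = ν ∧
      sourceMarginal s A B c (μ k) (relayGain s A (μ k) (q k)) = η := by
  by_cases h : ∃ i, 0 < μ i ∧ 0 < q i
  · obtain ⟨i, hμi, hqi⟩ := h
    refine ⟨relayMarginal s A B c (μ i) (relayGain s A (μ i) (q i)),
      sourceMarginal s A B c (μ i) (relayGain s A (μ i) (q i)), fun k hμk hqk => ⟨?_, ?_⟩⟩
    · exact IsMaxOn.hasDerivAt_eq_of_budgetSet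
        (F := fun k t => binRate s B c (μ k) (relayGain s A (μ k) t)) hq
        (isMaxOn_iff.2 fun w hw => isMaxOn_iff.1 hmax (μ, w) ⟨hμ, hw⟩) hqk hqi
        (hasDerivAt_binRate_relayGain_right hs hA hB (hμ.1 k) hqk)
        (hasDerivAt_binRate_relayGain_right hs hA hB (hμ.1 i) hqi)
    · exact IsMaxOn.hasDerivAt_eq_of_budgetSet
        (F := fun k t => binRate s B c t (relayGain s A t (q k))) hμ
        (isMaxOn_iff.2 fun w hw => isMaxOn_iff.1 hmax (w, q) ⟨hw, hq⟩) hμk hμi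
        (hasDerivAt_binRate_relayGain_left hs hA hB (hμ.1 k) hqk)
        (hasDerivAt_binRate_relayGain_left hs hA hB (hμ.1 i) hqi)
  · exact ⟨0, 0, fun k hμk hqk => (h ⟨k, hμk, hqk⟩).elim⟩

theorem exists_finset_relayGain_mem (hs : 0 < s) (hA : 0 < A) (hB : 0 < B) (hc : 0 ≤ c)
    (hcAB : c ^ 2 = A * B) {μ q : ι → ℝ} (hμ : μ ∈ budgetSet C₁) (hq : q ∈ budgetSet C₂)
    (hmax : IsMaxOn (reducedRate s A B c) (budgetSet C₁ ×ˢ budgetSet C₂) (μ, q))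
    (hμq : ∀ k, μ k = 0 → q k = 0) :
    ∃ F : Finset ℝ, #F ≤ 7 ∧
      ∀ k, relayGain s A (μ k) (q k) ≠ 0 → relayGain s A (μ k) (q k) ∈ F := by
  obtain ⟨ν, η, hνη⟩ := exists_marginals_eq_of_isMaxOn hs hA.le hB.le hμ hq hmax
  obtain ⟨F, hF, hmem⟩ := exists_finset_forall_marginals_eq hs hA hB hc hcAB ν η
  refine ⟨F, hF, fun k hk => ?_⟩
  have hqk : 0 < q k := (hq.1 k).lt_of_ne' fun h => hk (by simp [relayGain, h])
  have hμk : 0 < μ k := (hμ.1 k).lt_of_ne' fun h => hqk.ne' (hμq k h)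
  exact hmem _ _ hμk (relayGain_pos hs hA.le hμk.le hqk) (hνη k hμk hqk).1 (hνη k hμk hqk).2

theorem sum_binRate_le_reducedRate (hs : 0 < s) (hA : 0 ≤ A) {μ q μ' x' : ι → ℝ}
    (hmax : IsMaxOn (reducedRate s A B c) (budgetSet C₁ ×ˢ budgetSet C₂) (μ, q))
    (hμ' : 0 ≤ μ') (hx' : 0 ≤ x') (h₁ : ∑ k, μ' k ≤ C₁)
    (h₂ : ∑ k, (A * μ' k + s) * x' k ^ 2 ≤ C₂) :
    ∑ k, binRate s B c (μ' k) (x' k) ≤ reducedRate s A B c (μ, q) := by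
  have hq' : (fun k => (A * μ' k + s) * x' k ^ 2) ∈ budgetSet C₂ :=
    ⟨fun k => mul_nonneg (add_nonneg (mul_nonneg hA (hμ' k)) hs.le) (sq_nonneg _), h₂⟩
  refine le_of_eq_of_le ?_ (isMaxOn_iff.1 hmax (μ', _) ⟨⟨hμ', h₁⟩, hq'⟩)
  exact sum_congr rfl fun k _ => by rw [relayGain_mul_sq hs hA (hμ' k) (hx' k)]

end Reduced

theorem exists_optimal_allocation {ι : Type*} [Fintype ι] (hs : 0 < s) (hA : 0 < A)
    (hB : 0 < B) (hc : 0 ≤ c) (hcAB : c ^ 2 = A * B) {C₁ C₂ : ℝ} (hC₁ : 0 ≤ C₁) (hC₂ : 0 ≤ C₂) :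
    ∃ μ x : ι → ℝ, 0 ≤ μ ∧ 0 ≤ x ∧ ∑ k, μ k ≤ C₁ ∧ ∑ k, (A * μ k + s) * x k ^ 2 ≤ C₂ ∧
      (∀ μ' x' : ι → ℝ, 0 ≤ μ' → 0 ≤ x' → ∑ k, μ' k ≤ C₁ →
        ∑ k, (A * μ' k + s) * x' k ^ 2 ≤ C₂ →
        ∑ k, binRate s B c (μ' k) (x' k) ≤ ∑ k, binRate s B c (μ k) (x k)) ∧
      (∃ F : Finset ℝ, #F ≤ 7 ∧ ∀ k, x k ≠ 0 → x k ∈ F) ∧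
      ∀ i j, x i = x j → μ i = μ j := by
  obtain ⟨μ₀, hμ₀, q, hq, hmax, hμq⟩ :=
    exists_isMaxOn_reducedRate (ι := ι) (c := c) hs hA.le hB.le hC₁ hC₂
  set x : ι → ℝ := fun k => relayGain s A (μ₀ k) (q k)
  have hxq : ∀ k, (A * μ₀ k + s) * x k ^ 2 = q k :=
    fun k => mul_relayGain_sq hs hA.le (hμ₀.1 k) (hq.1 k)
  have hmean (W : ℝ → ℝ) := sum_fiberMean_mul x μ₀ W
  refine ⟨fun k => fiberMean x μ₀ (x k), x, fun k => fiberMean_nonneg hμ₀.1 _,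
    fun k => sqrt_nonneg _, ?_, ?_, fun μ' x' hμ' hx' h₁ h₂ => ?_,
    exists_finset_relayGain_mem hs hA hB hc hcAB hμ₀ hq hmax hμq, fun i j h => by simp only [h]⟩
  · simpa using (hmean fun _ => 1).trans_le (by simpa using hμ₀.2)
  · calc ∑ k, (A * fiberMean x μ₀ (x k) + s) * x k ^ 2
          = ∑ k, (fiberMean x μ₀ (x k) * (A * x k ^ 2) + s * x k ^ 2) :=
            sum_congr rfl fun k _ => by ring
      _ = ∑ k, (μ₀ k * (A * x k ^ 2) + s * x k ^ 2) := by
            rw [sum_add_distrib, sum_add_distrib, hmean fun y => A * y ^ 2]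
      _ = ∑ k, q k := sum_congr rfl fun k _ => by rw [← hxq]; ring
      _ ≤ C₂ := hq.2
  · calc ∑ k, binRate s B c (μ' k) (x' k) ≤ reducedRate s A B c (μ₀, q) :=
          sum_binRate_le_reducedRate hs hA.le hmax hμ' hx' h₁ h₂
      _ ≤ ∑ k, binRate s B c (fiberMean x μ₀ (x k)) (x k) :=
          sum_log_one_add_mul_le_fiberMean hμ₀.1 (effectiveSNR_nonneg hs.le hB.le)

section Complex

variable {a b σ : ℝ}

noncomputable def alignedGain (a b x : ℝ) : ℂ := ((x * (|a * b| / (a * b)) : ℝ) : ℂ)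

theorem norm_alignedGain (hab : a * b ≠ 0) {x : ℝ} (hx : 0 ≤ x) : ‖alignedGain a b x‖ = x := by
  rw [alignedGain, Complex.norm_real, norm_mul, norm_div, Real.norm_eq_abs, Real.norm_eq_abs,
    Real.norm_eq_abs, abs_abs, div_self (abs_ne_zero.2 hab), mul_one, abs_of_nonneg hx]

theorem one_add_mul_alignedGain (hab : a * b ≠ 0) (x : ℝ) :
    1 + ((a * b : ℝ) : ℂ) * alignedGain a b x = ((1 + |a * b| * x : ℝ) : ℂ) := by
  have : a * b * (x * (|a * b| / (a * b))) = |a * b| * x := by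
    field_simp [left_ne_zero_of_mul hab, right_ne_zero_of_mul hab]
  rw [alignedGain, ← Complex.ofReal_mul, this]
  push_cast
  ring

theorem binRate_sq_eq_log (σ b c m x : ℝ) :
    binRate (σ ^ 2) (b ^ 2) c m x =
      log (1 + m / σ ^ 2 * (1 + c * x) ^ 2 / (1 + b ^ 2 * x ^ 2)) := by
  rw [binRate, effectiveSNR]
  congr 2
  field_simp

theorem log_one_add_le_binRate {m : ℝ} (hm : 0 ≤ m) (z : ℂ) :
    log (1 + m / σ ^ 2 * ‖1 + ((a * b : ℝ) : ℂ) * z‖ ^ 2 / (1 + b ^ 2 * ‖z‖ ^ 2)) ≤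
      binRate (σ ^ 2) (b ^ 2) |a * b| m ‖z‖ := by
  have h : ‖1 + ((a * b : ℝ) : ℂ) * z‖ ≤ 1 + |a * b| * ‖z‖ :=
    (norm_add_le _ _).trans (by simp)
  rw [binRate_sq_eq_log]
  exact log_le_log (by positivity) (by gcongr)

theorem log_one_add_alignedGain_eq_binRate (hab : a * b ≠ 0) (m : ℝ) {x : ℝ} (hx : 0 ≤ x) :
    log (1 + m / σ ^ 2 * ‖1 + ((a * b : ℝ) : ℂ) * alignedGain a b x‖ ^ 2 /
      (1 + b ^ 2 * ‖alignedGain a b x‖ ^ 2)) = binRate (σ ^ 2) (b ^ 2) |a * b| m x := by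
  rw [binRate_sq_eq_log, one_add_mul_alignedGain hab, Complex.norm_real, Real.norm_eq_abs,
    abs_of_nonneg (by positivity), norm_alignedGain hab hx]

end Complex

end LTIRelay

open LTIRelay

theorem lti_maximizer_fifty_modes_general (a b : ℝ) (hab : a * b ≠ 0) (σ P γ : ℝ)
    (hσ : 0 < σ) (hP : 0 < P) (hγ : 0 < γ) (n : ℕ) :
    ∃ (μ : Fin n → ℝ) (l : Fin n → ℂ),
      (∀ i, 0 ≤ μ i) ∧ (∑ i, μ i ≤ (n : ℝ) * P) ∧
      (∑ i, (a ^ 2 * μ i + σ ^ 2) * ‖l i‖ ^ 2 ≤ (n : ℝ) * γ * P) ∧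
      (∀ (μ' : Fin n → ℝ) (l' : Fin n → ℂ), (∀ i, 0 ≤ μ' i) →
        (∑ i, μ' i ≤ (n : ℝ) * P) →
        (∑ i, (a ^ 2 * μ' i + σ ^ 2) * ‖l' i‖ ^ 2 ≤ (n : ℝ) * γ * P) →
        (1 / (2 * (n : ℝ))) * ∑ i, Real.log
            (1 + (μ' i / σ ^ 2) * ‖1 + ((a * b : ℝ) : ℂ) * l' i‖ ^ 2
              / (1 + b ^ 2 * ‖l' i‖ ^ 2))
          ≤ (1 / (2 * (n : ℝ))) * ∑ i, Real.log
            (1 + (μ i / σ ^ 2) * ‖1 + ((a * b : ℝ) : ℂ) * l i‖ ^ 2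
              / (1 + b ^ 2 * ‖l i‖ ^ 2))) ∧
      (Finset.image l Finset.univ).card ≤ 50 ∧
      ((Finset.image l Finset.univ).filter (· ≠ 0)).card ≤ 49 ∧
      (∀ i j, l i = l j → μ i = μ j) := by
  have ha : a ≠ 0 := left_ne_zero_of_mul hab
  have hb : b ≠ 0 := right_ne_zero_of_mul hab
  obtain ⟨μ, x, hμ, hx, hμP, hxP, hopt, ⟨F, hF, hxF⟩, hμx⟩ :=
    exists_optimal_allocation (ι := Fin n) (C₁ := n * P) (C₂ := n * γ * P) (pow_pos hσ 2)
      (by positivity : 0 < a ^ 2) (by positivity : 0 < b ^ 2) (abs_nonneg (a * b))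
      (by rw [sq_abs, mul_pow]) (by positivity) (by positivity)
  set l : Fin n → ℂ := fun k => alignedGain a b (x k)
  have hl (k : Fin n) : ‖l k‖ = x k := norm_alignedGain hab (hx k)
  have hlF (k : Fin n) (hk : l k ≠ 0) : l k ∈ F.image (alignedGain a b) :=
    mem_image_of_mem _ (hxF k fun h => hk (by simp [l, h, alignedGain]))
  have hF' := card_image_le (s := F) (f := alignedGain a b)
  refine ⟨μ, l, hμ, hμP, by simpa only [hl] using hxP, fun μ' l' hμ' hμ'P hl'P => ?_,
    (card_image_le_card_add_one hlF).trans (by omega),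
    (card_filter_ne_zero_image_le hlF).trans (by omega),
    fun i j h => hμx i j (by rw [← hl i, ← hl j, h])⟩
  refine mul_le_mul_of_nonneg_left ?_ (by positivity)
  calc _ ≤ ∑ i, binRate (σ ^ 2) (b ^ 2) |a * b| (μ' i) ‖l' i‖ :=
        sum_le_sum fun i _ => log_one_add_le_binRate (hμ' i) (l' i)
    _ ≤ ∑ i, binRate (σ ^ 2) (b ^ 2) |a * b| (μ i) (x i) :=
        hopt μ' (fun i => ‖l' i‖) hμ' (fun i => norm_nonneg _) hμ'P hl'P
    _ = _ := sum_congr rfl fun i _ => (log_one_add_alignedGain_eq_binRate hab _ (hx i)).symm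

/-- Structural reduction for complex LTI relaying over `n` frequency bins: the
rate maximization admits a maximizer whose relay gains take at most 50 distinct
values, at most 49 of them nonzero, with equal source power in bins sharing the
same gain. -/
theorem lti_maximizer_fifty_modes (a b : ℝ) (hab : a * b ≠ 0) (σ P γ : ℝ)
    (hσ : 0 < σ) (hP : 0 < P) (hγ : 0 < γ) (n : ℕ) (hn : 0 < n) :
    ∃ (μ : Fin n → ℝ) (l : Fin n → ℂ),
      (∀ i, 0 ≤ μ i) ∧ (∑ i, μ i ≤ (n : ℝ) * P) ∧
      (∑ i, (a ^ 2 * μ i + σ ^ 2) * ‖l i‖ ^ 2 ≤ (n : ℝ) * γ * P) ∧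
      (∀ (μ' : Fin n → ℝ) (l' : Fin n → ℂ), (∀ i, 0 ≤ μ' i) →
        (∑ i, μ' i ≤ (n : ℝ) * P) →
        (∑ i, (a ^ 2 * μ' i + σ ^ 2) * ‖l' i‖ ^ 2 ≤ (n : ℝ) * γ * P) →
        (1 / (2 * (n : ℝ))) * ∑ i, Real.log
            (1 + (μ' i / σ ^ 2) * ‖1 + ((a * b : ℝ) : ℂ) * l' i‖ ^ 2
              / (1 + b ^ 2 * ‖l' i‖ ^ 2))
          ≤ (1 / (2 * (n : ℝ))) * ∑ i, Real.log
            (1 + (μ i / σ ^ 2) * ‖1 + ((a * b : ℝ) : ℂ) * l i‖ ^ 2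
              / (1 + b ^ 2 * ‖l i‖ ^ 2))) ∧
      (Finset.image l Finset.univ).card ≤ 50 ∧
      ((Finset.image l Finset.univ).filter (· ≠ 0)).card ≤ 49 ∧
      (∀ i j, l i = l j → μ i = μ j) :=
  lti_maximizer_fifty_modes_general a b hab σ P γ hσ hP hγ n
end

section
/- Fix real numbers a, b with ab ≠ 0 and σ > 0, P > 0, γ > 0. For every positive integer n, the maximization of (1/2n) Σ_{i=1}^n log(1 + (μ_i/σ²)·(1+abλ_i)²/(1+b²λ_i²)) over μ ∈ ℝⁿ, λ ∈ ℝⁿ subject to μ_i ≥ 0 for all i, Σ_{i=1}^n μ_i ≤ nP, and Σ_{i=1}^n (a²μ_i + σ²)λ_i² ≤ nγP admits a maximizer (μ*, λ*) such that the set of values {λ*_1, …, λ*_n} has at most 8 elements, at most 7 of which are nonzero, and such that μ*_i = μ*_j whenever λ*_i = λ*_j. -/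
/-
A maximizer exists by compactness of the feasible set, and setting the gain to zero in bins
without source power changes neither the objective nor feasibility. Perturbing a maximizer in two
active bins along the constraint surface shows that all active bins satisfy the same KKT equations,
with multipliers `ν` (power) and `η` (relay power) that do not depend on the bin. Eliminating the
power `m` from these two equations leaves a nonzero polynomial equation of degree at most 7 in the
gain (when `η = 0`, the gain equation alone forces the gain to be `-1/(ab)` or `a/b`), so at most
7 distinct nonzero gains occur. Finally, averaging the source power over the bins sharing a gain
keeps both constraints, which are linear in the power for fixed gains, and does not decrease the
objective, since the rate is concave in the power.
-/

open Finset Polynomial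

noncomputable section

namespace LTIRelay

variable {ι : Type*} [Fintype ι]

theorem sum_update_update {α β M : Type*} [AddCommGroup M] [DecidableEq ι] (F : α → β → M)
    (x : ι → α) (y : ι → β) {i j : ι} (hij : i ≠ j) (x₁ x₂ : α) (y₁ y₂ : β) :
    ∑ k, F (Function.update (Function.update x i x₁) j x₂ k)
        (Function.update (Function.update y i y₁) j y₂ k)
      = ∑ k, F (x k) (y k) + (F x₁ y₁ + F x₂ y₂ - F (x i) (y i) - F (x j) (y j)) := by
  rw [← sub_eq_iff_eq_add', ← Finset.sum_sub_distrib, Fintype.sum_eq_add i j hij]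
  · simp [Function.update_of_ne hij]
    abel
  · rintro k ⟨hki, hkj⟩
    simp [Function.update_of_ne hki, Function.update_of_ne hkj]

theorem hasDerivAt_sign_mul_sqrt {N : ℝ → ℝ} {N' s t : ℝ} (ht : t ≠ 0)
    (hN : HasDerivAt N N' s) (hNs : N s = t ^ 2) :
    HasDerivAt (fun x => t / |t| * √(N x)) (N' / (2 * t)) s := by
  have hsqrt := ((Real.hasDerivAt_sqrt (by rw [hNs]; positivity)).comp s hN).const_mul (t / |t|)
  refine hsqrt.congr_deriv ?_
  rw [hNs, Real.sqrt_sq_eq_abs]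
  have : |t| ≠ 0 := abs_ne_zero.mpr ht
  field_simp
  rw [sq_abs]

theorem sign_mul_sqrt_sq {t y : ℝ} (ht : t ≠ 0) (hy : 0 ≤ y) : (t / |t| * √y) ^ 2 = y := by
  rw [mul_pow, div_pow, sq_abs, div_self (pow_ne_zero 2 ht), one_mul, Real.sq_sqrt hy]

section FiberAverage

variable {β : Type*} [DecidableEq β] (f : ι → β) (x : ι → ℝ)

def fiberAverage (i : ι) : ℝ := (∑ j with f j = f i, x j) / #{j | f j = f i}

variable {f x}

theorem fiberAverage_eq_of_eq {i j : ι} (h : f i = f j) :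
    fiberAverage f x i = fiberAverage f x j := by
  simp only [fiberAverage, h]

theorem fiberAverage_nonneg (hx : ∀ i, 0 ≤ x i) (i : ι) : 0 ≤ fiberAverage f x i :=
  div_nonneg (sum_nonneg fun j _ => hx j) (Nat.cast_nonneg _)

theorem sum_fiber_fiberAverage (v : β) (φ : ℝ → ℝ) :
    ∑ i with f i = v, φ (fiberAverage f x i)
      = #{i | f i = v} * φ ((∑ j with f j = v, x j) / #{j | f j = v}) := by
  rw [← nsmul_eq_mul, ← sum_const]
  exact sum_congr rfl fun i hi => by rw [fiberAverage, (mem_filter.1 hi).2]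

theorem card_fiber_pos {v : β} (hv : v ∈ univ.image f) : (0 : ℝ) < #{i | f i = v} := by
  obtain ⟨i, -, rfl⟩ := mem_image.1 hv
  exact_mod_cast card_pos.2 ⟨i, by simp⟩

variable (f x) in
theorem sum_mul_fiberAverage (g : β → ℝ) :
    ∑ i, g (f i) * fiberAverage f x i = ∑ i, g (f i) * x i := by
  have hmaps : ∀ i ∈ univ, f i ∈ univ.image f := fun i _ => mem_image_of_mem f (mem_univ i)
  rw [← sum_fiberwise_of_maps_to hmaps, ← sum_fiberwise_of_maps_to hmaps]
  refine sum_congr rfl fun v hv => ?_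
  calc ∑ i with f i = v, g (f i) * fiberAverage f x i
      = ∑ i with f i = v, g v * fiberAverage f x i :=
        sum_congr rfl fun i hi => by rw [(mem_filter.1 hi).2]
    _ = g v * ∑ j with f j = v, x j := by
        rw [sum_fiber_fiberAverage v (g v * ·)]
        field_simp [(card_fiber_pos hv).ne']
    _ = ∑ i with f i = v, g (f i) * x i := by
        rw [mul_sum]
        exact sum_congr rfl fun i hi => by rw [(mem_filter.1 hi).2]

theorem sum_le_sum_fiberAverage {s : Set ℝ} (φ : β → ℝ → ℝ) (hφ : ∀ v, ConcaveOn ℝ s (φ v))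
    (hx : ∀ i, x i ∈ s) : ∑ i, φ (f i) (x i) ≤ ∑ i, φ (f i) (fiberAverage f x i) := by
  have hmaps : ∀ i ∈ univ, f i ∈ univ.image f := fun i _ => mem_image_of_mem f (mem_univ i)
  rw [← sum_fiberwise_of_maps_to hmaps, ← sum_fiberwise_of_maps_to hmaps]
  refine sum_le_sum fun v hv => ?_
  have hcard := card_fiber_pos hv
  have hjensen := (hφ v).le_map_sum (t := {i | f i = v}) (w := fun _ => (#{i | f i = v} : ℝ)⁻¹)
    (p := x) (fun _ _ => by positivity) (by simp [hcard.ne']) (fun i _ => hx i)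
  simp only [smul_eq_mul, ← mul_sum] at hjensen
  calc ∑ i with f i = v, φ (f i) (x i) = ∑ i with f i = v, φ v (x i) :=
        sum_congr rfl fun i hi => by rw [(mem_filter.1 hi).2]
    _ ≤ #{i | f i = v} * φ v ((∑ j with f j = v, x j) / #{j | f j = v}) := by
        rw [div_eq_inv_mul]
        rwa [inv_mul_le_iff₀ hcard] at hjensen
    _ = ∑ i with f i = v, φ (f i) (fiberAverage f x i) := by
        rw [← sum_fiber_fiberAverage v (φ v)]
        exact sum_congr rfl fun i hi => by rw [(mem_filter.1 hi).2]

end FiberAverage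

variable (a b σ : ℝ)

def rate (m t : ℝ) : ℝ :=
  Real.log (1 + m / σ ^ 2 * (1 + a * b * t) ^ 2 / (1 + b ^ 2 * t ^ 2))

def relayCost (m t : ℝ) : ℝ := (a ^ 2 * m + σ ^ 2) * t ^ 2

def rateDerivPower (m t : ℝ) : ℝ :=
  (1 + a * b * t) ^ 2 / (σ ^ 2 * (1 + b ^ 2 * t ^ 2) + m * (1 + a * b * t) ^ 2)

def rateDerivGain (m t : ℝ) : ℝ :=
  2 * m * (1 + a * b * t) * (a * b - b ^ 2 * t) /
    ((1 + b ^ 2 * t ^ 2) * (σ ^ 2 * (1 + b ^ 2 * t ^ 2) + m * (1 + a * b * t) ^ 2))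

theorem hasDerivAt_rate_comp {w u : ℝ → ℝ} {w' u' s : ℝ} (hσ : σ ≠ 0)
    (hw : HasDerivAt w w' s) (hu : HasDerivAt u u' s) (hws : 0 ≤ w s) :
    HasDerivAt (fun x => rate a b σ (w x) (u x))
      (w' * rateDerivPower a b σ (w s) (u s) + u' * rateDerivGain a b σ (w s) (u s)) s := by
  have hB : 0 < 1 + b ^ 2 * u s ^ 2 := by positivity
  have harg := ((((hw.div_const (σ ^ 2)).fun_mul
    (((hu.const_mul (a * b)).const_add 1).fun_pow 2)).fun_div
    (((hu.fun_pow 2).const_mul (b ^ 2)).const_add 1) hB.ne').const_add 1)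
  have hpos : 0 < 1 + w s / σ ^ 2 * (1 + a * b * u s) ^ 2 / (1 + b ^ 2 * u s ^ 2) := by
    positivity
  refine (harg.log hpos.ne').congr_deriv ?_
  simp only [rateDerivPower, rateDerivGain]
  field_simp
  ring

theorem rate_zero_left (t : ℝ) : rate a b σ 0 t = 0 := by
  simp [rate]

theorem concaveOn_rate (t : ℝ) : ConcaveOn ℝ (Set.Ici 0) (fun m => rate a b σ m t) := by
  set κ := (1 + a * b * t) ^ 2 / (1 + b ^ 2 * t ^ 2) / σ ^ 2
  have hrate : (fun m => rate a b σ m t) = Real.log ∘ AffineMap.lineMap 1 (1 + κ) := by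
    ext m
    simp only [rate, Function.comp_apply, AffineMap.lineMap_apply_ring', κ]
    congr 1
    ring
  rw [hrate]
  refine (strictConcaveOn_log_Ioi.concaveOn.comp_affineMap _).subset (fun m hm => ?_) (convex_Ici 0)
  have hκ : 0 ≤ κ := by positivity
  simp only [Set.mem_preimage, AffineMap.lineMap_apply_ring', add_sub_cancel_left, Set.mem_Ioi]
  have : 0 ≤ m := hm
  positivity

theorem hasDerivAt_relay_balance (hσ : 0 < σ) {m₁ m₂ t₁ t₂ : ℝ} (hm₁ : 0 ≤ m₁) (p q : ℝ) :
    HasDerivAt (fun s => (relayCost a σ m₁ t₁ + relayCost a σ m₂ t₂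
        - relayCost a σ (m₂ + s * p) (t₂ + s * q)) / (a ^ 2 * (m₁ - s * p) + σ ^ 2))
      ((a ^ 2 * p * (t₁ ^ 2 - t₂ ^ 2) - 2 * (a ^ 2 * m₂ + σ ^ 2) * t₂ * q) /
        (a ^ 2 * m₁ + σ ^ 2)) 0 := by
  have hD₁ : 0 < a ^ 2 * m₁ + σ ^ 2 := by positivity
  have hnum := (((((hasDerivAt_mul_const p).const_add m₂).const_mul (a ^ 2)).add_const
    (σ ^ 2)).fun_mul (((hasDerivAt_mul_const q).const_add t₂).fun_pow 2)).const_sub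
    (relayCost a σ m₁ t₁ + relayCost a σ m₂ t₂) (x := 0)
  have hden :=
    (((hasDerivAt_mul_const p).const_sub m₁).const_mul (a ^ 2)).add_const (σ ^ 2) (x := 0)
  refine (hnum.fun_div hden (by simpa using hD₁.ne')).congr_deriv ?_
  simp only [relayCost, zero_mul, sub_zero, add_zero]
  field_simp
  ring

theorem pair_stationary (hσ : 0 < σ) {m₁ m₂ t₁ t₂ : ℝ} (hm₁ : 0 < m₁) (hm₂ : 0 < m₂)
    (ht₁ : t₁ ≠ 0)
    (hmax : ∀ w₁ w₂ u₁ u₂ : ℝ, 0 ≤ w₁ → 0 ≤ w₂ → w₁ + w₂ = m₁ + m₂ →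
      relayCost a σ w₁ u₁ + relayCost a σ w₂ u₂ = relayCost a σ m₁ t₁ + relayCost a σ m₂ t₂ →
      rate a b σ w₁ u₁ + rate a b σ w₂ u₂ ≤ rate a b σ m₁ t₁ + rate a b σ m₂ t₂)
    (p q : ℝ) :
    2 * t₁ * (a ^ 2 * m₁ + σ ^ 2) * (p * (rateDerivPower a b σ m₂ t₂ - rateDerivPower a b σ m₁ t₁)
        + q * rateDerivGain a b σ m₂ t₂)
      + rateDerivGain a b σ m₁ t₁
        * (a ^ 2 * p * (t₁ ^ 2 - t₂ ^ 2) - 2 * (a ^ 2 * m₂ + σ ^ 2) * t₂ * q) = 0 := by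
  -- Move bin 2 along the line `(m₂ + s p, t₂ + s q)`, give bin 1 the power `m₁ - s p`, and
  -- solve the relay constraint for the gain of bin 1: its square is `N s`.
  have hN := hasDerivAt_relay_balance a σ hσ hm₁.le (m₂ := m₂) (t₁ := t₁) (t₂ := t₂) p q
  set K := relayCost a σ m₁ t₁ + relayCost a σ m₂ t₂
  set N : ℝ → ℝ := fun s =>
    (K - relayCost a σ (m₂ + s * p) (t₂ + s * q)) / (a ^ 2 * (m₁ - s * p) + σ ^ 2)
  have hN₀ : N 0 = t₁ ^ 2 := by
    have hD₁ : a ^ 2 * m₁ + σ ^ 2 ≠ 0 := by positivity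
    simp only [N, K, relayCost, zero_mul, sub_zero, add_zero]
    field_simp
    ring
  have hψ₀ : t₁ / |t₁| * √(N 0) = t₁ := by
    have : |t₁| ≠ 0 := abs_ne_zero.mpr ht₁
    rw [hN₀, Real.sqrt_sq_eq_abs]
    field_simp
  have hw₁ := (hasDerivAt_mul_const p).const_sub m₁ (x := 0)
  have hw₂ := (hasDerivAt_mul_const p).const_add m₂ (x := 0)
  have hφ := (hasDerivAt_rate_comp a b σ hσ.ne' hw₁ (hasDerivAt_sign_mul_sqrt ht₁ hN hN₀)
    (by simpa using hm₁.le)).add (hasDerivAt_rate_comp a b σ hσ.ne' hw₂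
      ((hasDerivAt_mul_const q).const_add t₂) (by simpa using hm₂.le))
  simp only [zero_mul, sub_zero, add_zero, hψ₀] at hφ
  have hloc : IsLocalMax ((fun s => rate a b σ (m₁ - s * p) (t₁ / |t₁| * √(N s)))
      + fun s => rate a b σ (m₂ + s * p) (t₂ + s * q)) 0 := by
    have hpos₁ := hw₁.continuousAt.tendsto.eventually (lt_mem_nhds (by simpa using hm₁))
    have hpos₂ := hw₂.continuousAt.tendsto.eventually (lt_mem_nhds (by simpa using hm₂))
    have hposN := hN.continuousAt.tendsto.eventually (lt_mem_nhds (by rw [hN₀]; positivity))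
    filter_upwards [hpos₁, hpos₂, hposN] with s h₁ h₂ hNs
    have hψs : relayCost a σ (m₁ - s * p) (t₁ / |t₁| * √(N s))
        = K - relayCost a σ (m₂ + s * p) (t₂ + s * q) := by
      rw [relayCost, sign_mul_sqrt_sq ht₁ hNs.le]
      exact mul_div_cancel₀ _ (by positivity)
    simpa [hψ₀] using hmax _ _ _ _ h₁.le h₂.le (by ring) (by rw [hψs]; ring)
  have h₀ := hloc.hasDerivAt_eq_zero hφ
  field_simp at h₀
  linear_combination h₀

-- `ν` and `η` are the Lagrange multipliers of the power and relay-power constraints.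
def SatisfiesKKT (ν η m t : ℝ) : Prop :=
  rateDerivPower a b σ m t = ν + η * a ^ 2 * t ^ 2 ∧
    rateDerivGain a b σ m t = 2 * η * (a ^ 2 * m + σ ^ 2) * t

-- What remains of the two KKT equations after eliminating `m` (see `eval_kktPoly`), written in
-- coefficients since its `t ^ 8` terms cancel.
def kktPoly (ν η : ℝ) : ℝ[X] :=
  C (a * b * ν - a * b * σ ^ 2 * ν ^ 2)
  + C (-(σ ^ 2 * ν * η) - b ^ 2 * ν + b ^ 2 * σ ^ 2 * ν ^ 2 - a ^ 2 * η + a ^ 2 * σ ^ 2 * ν * η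
      + 2 * a ^ 2 * b ^ 2 * ν) * X
  + C (-(3 * a * b * σ ^ 2 * ν * η) - 2 * a * b ^ 3 * ν - a * b ^ 3 * σ ^ 2 * ν ^ 2
      - 2 * a ^ 3 * b * η - a ^ 3 * b * σ ^ 2 * ν * η + a ^ 3 * b ^ 3 * ν) * X ^ 2
  + C (-(b ^ 2 * σ ^ 2 * ν * η) + b ^ 4 * σ ^ 2 * ν ^ 2 - a ^ 2 * σ ^ 2 * η ^ 2
      - 2 * a ^ 2 * b ^ 2 * η + a ^ 2 * b ^ 2 * σ ^ 2 * ν * η - a ^ 2 * b ^ 4 * ν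
      + a ^ 4 * σ ^ 2 * η ^ 2 - a ^ 4 * b ^ 2 * η) * X ^ 3
  + C (-(3 * a * b ^ 3 * σ ^ 2 * ν * η) - 3 * a ^ 3 * b * σ ^ 2 * η ^ 2 - 5 * a ^ 3 * b ^ 3 * η
      - a ^ 3 * b ^ 3 * σ ^ 2 * ν * η) * X ^ 4
  + C (-(a ^ 2 * b ^ 2 * σ ^ 2 * η ^ 2) - 4 * a ^ 4 * b ^ 4 * η) * X ^ 5
  + C (-(3 * a ^ 3 * b ^ 3 * σ ^ 2 * η ^ 2) - a ^ 5 * b ^ 5 * η) * X ^ 6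
  + C (-(a ^ 4 * b ^ 4 * σ ^ 2 * η ^ 2)) * X ^ 7

theorem eval_kktPoly (ν η t : ℝ) :
    (kktPoly a b σ ν η).eval t =
      ((1 + a * b * t) ^ 2 - (ν + η * a ^ 2 * t ^ 2) * σ ^ 2 * (1 + b ^ 2 * t ^ 2)) *
          ((ν + η * a ^ 2 * t ^ 2) * (a * b - b ^ 2 * t)
            - η * a ^ 2 * t * (1 + b ^ 2 * t ^ 2) * (1 + a * b * t))
        - η * σ ^ 2 * t * (1 + b ^ 2 * t ^ 2) * (ν + η * a ^ 2 * t ^ 2) * (1 + a * b * t) ^ 3 := by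
  simp only [kktPoly, eval_add, eval_mul, eval_pow, eval_C, eval_X]
  ring

theorem kktPoly_natDegree_le (ν η : ℝ) : (kktPoly a b σ ν η).natDegree ≤ 7 := by
  unfold kktPoly
  compute_degree

variable {a b σ}

theorem kktPoly_ne_zero (hab : a * b ≠ 0) (hσ : σ ≠ 0) {ν η : ℝ} (hη : η ≠ 0) :
    kktPoly a b σ ν η ≠ 0 := by
  intro h
  have h₇ : (kktPoly a b σ ν η).coeff 7 = -(a ^ 4 * b ^ 4 * σ ^ 2 * η ^ 2) := by
    simp only [kktPoly, coeff_add, coeff_C_mul, coeff_X_pow, coeff_C, coeff_X]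
    norm_num
  rw [h, coeff_zero, eq_comm, neg_eq_zero, ← mul_pow] at h₇
  exact mul_ne_zero (mul_ne_zero (pow_ne_zero 4 hab) (pow_ne_zero 2 hσ)) (pow_ne_zero 2 hη) h₇

variable {ν η m t : ℝ}

theorem SatisfiesKKT.isRoot_kktPoly (hσ : σ ≠ 0) (hm : 0 ≤ m) (h : SatisfiesKKT a b σ ν η m t) :
    (kktPoly a b σ ν η).IsRoot t := by
  obtain ⟨hpower, hgain⟩ := h
  have hB : 0 < 1 + b ^ 2 * t ^ 2 := by positivity
  have hS : 0 < σ ^ 2 * (1 + b ^ 2 * t ^ 2) + m * (1 + a * b * t) ^ 2 := by positivity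
  rw [rateDerivPower, div_eq_iff hS.ne'] at hpower
  rw [rateDerivGain, div_eq_iff (mul_pos hB hS).ne'] at hgain
  rw [IsRoot, eval_kktPoly]
  linear_combination
    ((ν + η * a ^ 2 * t ^ 2) * (a * b - b ^ 2 * t)
      - η * a ^ 2 * t * (1 + b ^ 2 * t ^ 2) * (1 + a * b * t)
      - (ν + η * a ^ 2 * t ^ 2) * (1 + a * b * t) * η * t * (1 + b ^ 2 * t ^ 2)
        * (a ^ 2 * m + σ ^ 2)) * hpower
    + ((ν + η * a ^ 2 * t ^ 2) ^ 2 * (1 + a * b * t) / 2) * hgain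

theorem SatisfiesKKT.eq_or_eq_of_eta_eq_zero (hab : a * b ≠ 0) (hσ : σ ≠ 0) (hm : 0 < m)
    (h : SatisfiesKKT a b σ ν 0 m t) : t = -(a * b)⁻¹ ∨ t = a / b := by
  have ha : a ≠ 0 := left_ne_zero_of_mul hab
  have hb : b ≠ 0 := right_ne_zero_of_mul hab
  have hgain := h.2
  simp only [rateDerivGain, mul_zero, zero_mul, div_eq_zero_iff, mul_eq_zero, hm.ne',
    OfNat.ofNat_ne_zero, false_or] at hgain
  rcases hgain with (hE | hE) | hB | hS
  · left
    field_simp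
    linear_combination hE
  · right
    rw [eq_div_iff hb]
    apply mul_left_cancel₀ hb
    linear_combination -hE
  · exact absurd hB (by positivity)
  · exact absurd hS (by positivity)

theorem card_le_seven_of_satisfiesKKT (hab : a * b ≠ 0) (hσ : σ ≠ 0) {T : Finset ℝ}
    (hT : ∀ t ∈ T, ∃ m, 0 < m ∧ SatisfiesKKT a b σ ν η m t) : #T ≤ 7 := by
  rcases eq_or_ne η 0 with rfl | hη
  · calc #T ≤ #{-(a * b)⁻¹, a / b} := card_le_card fun t ht => by
          obtain ⟨m, hm, h⟩ := hT t ht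
          simpa using h.eq_or_eq_of_eta_eq_zero hab hσ hm
      _ ≤ 7 := card_le_two.trans (by norm_num)
  · refine (card_le_degree_of_subset_roots fun t ht => ?_).trans (kktPoly_natDegree_le a b σ ν η)
    obtain ⟨m, hm, h⟩ := hT t ht
    exact (mem_roots (kktPoly_ne_zero hab hσ hη)).2 (h.isRoot_kktPoly hσ hm.le)

variable (a b σ) in
def totalRate (μ l : ι → ℝ) : ℝ := ∑ i, rate a b σ (μ i) (l i)

structure Feasible (a σ p r : ℝ) (μ l : ι → ℝ) : Prop where
  nonneg : ∀ i, 0 ≤ μ i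
  power_le : ∑ i, μ i ≤ p
  relayCost_le : ∑ i, relayCost a σ (μ i) (l i) ≤ r

structure IsOptimal (a b σ p r : ℝ) (μ l : ι → ℝ) : Prop where
  feasible : Feasible a σ p r μ l
  le : ∀ μ' l' : ι → ℝ, Feasible a σ p r μ' l' → totalRate a b σ μ' l' ≤ totalRate a b σ μ l

variable {p r : ℝ} {μ l : ι → ℝ}

theorem relayCost_nonneg {m : ℝ} (hm : 0 ≤ m) (t : ℝ) : 0 ≤ relayCost a σ m t := by
  rw [relayCost]
  positivity

theorem Feasible.le_power (h : Feasible a σ p r μ l) (i : ι) : μ i ≤ p :=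
  (single_le_sum (fun j _ => h.nonneg j) (mem_univ i)).trans h.power_le

theorem Feasible.abs_le (h : Feasible a σ p r μ l) (hσ : σ ≠ 0) (i : ι) :
    |l i| ≤ √(r / σ ^ 2) := by
  refine Real.abs_le_sqrt ((le_div_iff₀ (by positivity)).2 ?_)
  calc l i ^ 2 * σ ^ 2 ≤ relayCost a σ (μ i) (l i) := by
        rw [relayCost]
        nlinarith [mul_nonneg (mul_nonneg (sq_nonneg a) (h.nonneg i)) (sq_nonneg (l i))]
    _ ≤ ∑ j, relayCost a σ (μ j) (l j) :=
        single_le_sum (fun j _ => relayCost_nonneg (h.nonneg j) _) (mem_univ i)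
    _ ≤ r := h.relayCost_le

theorem isCompact_setOf_feasible (hσ : σ ≠ 0) :
    IsCompact {z : (ι → ℝ) × (ι → ℝ) | Feasible a σ p r z.1 z.2} := by
  have hK : {z : (ι → ℝ) × (ι → ℝ) | Feasible a σ p r z.1 z.2}
      = (⋂ i, {z | 0 ≤ z.1 i}) ∩ {z | ∑ i, z.1 i ≤ p}
        ∩ {z | ∑ i, relayCost a σ (z.1 i) (z.2 i) ≤ r} := by
    ext z
    simp only [Set.mem_ofPred_eq, Set.mem_inter_iff, Set.mem_iInter]
    exact ⟨fun h => ⟨⟨h.1, h.2⟩, h.3⟩, fun h => ⟨h.1.1, h.1.2, h.2⟩⟩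
  have hclosed : IsClosed {z : (ι → ℝ) × (ι → ℝ) | Feasible a σ p r z.1 z.2} := by
    rw [hK]
    refine ((isClosed_iInter fun i => isClosed_le continuous_const (by fun_prop)).inter
      (isClosed_le (by fun_prop) continuous_const)).inter (isClosed_le ?_ continuous_const)
    simp only [relayCost]
    fun_prop
  refine (isCompact_Icc (a := (0, fun _ => -√(r / σ ^ 2)))
    (b := (fun _ => p, fun _ => √(r / σ ^ 2)))).of_isClosed_subset hclosed fun z h => ?_
  exact ⟨⟨h.nonneg, fun i => (abs_le.1 (h.abs_le hσ i)).1⟩,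
    ⟨h.le_power, fun i => (abs_le.1 (h.abs_le hσ i)).2⟩⟩

variable (a b) in
theorem exists_isOptimal (hσ : σ ≠ 0) (hp : 0 ≤ p) (hr : 0 ≤ r) :
    ∃ μ l : ι → ℝ, IsOptimal a b σ p r μ l := by
  have hcont : ContinuousOn (fun z : (ι → ℝ) × (ι → ℝ) => totalRate a b σ z.1 z.2)
      {z | Feasible a σ p r z.1 z.2} := by
    refine continuousOn_finsetSum _ fun i _ => (Continuous.continuousOn ?_).log ?_
    · fun_prop (disch := intros; positivity)
    rintro z ⟨hnonneg, -, -⟩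
    have := hnonneg i
    positivity
  obtain ⟨z, hz, hmax⟩ := (isCompact_setOf_feasible hσ).exists_isMaxOn
    ⟨0, fun _ => le_rfl, by simpa using hp, by simpa [relayCost] using hr⟩ hcont
  exact ⟨z.1, z.2, hz, fun μ' l' h' => hmax (show (μ', l') ∈ _ from h')⟩

theorem IsOptimal.zero_idle_gains (h : IsOptimal a b σ p r μ l) :
    IsOptimal a b σ p r μ (fun i => if μ i = 0 then 0 else l i) := by
  have hrate : totalRate a b σ μ (fun i => if μ i = 0 then 0 else l i) = totalRate a b σ μ l :=
    sum_congr rfl fun i _ => by dsimp only; split_ifs with hi <;> simp [hi, rate_zero_left]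
  refine ⟨⟨h.feasible.nonneg, h.feasible.power_le,
    (sum_le_sum fun i _ => ?_).trans h.feasible.relayCost_le⟩, hrate ▸ h.le⟩
  split_ifs
  · rw [relayCost, zero_pow two_ne_zero, mul_zero]
    exact relayCost_nonneg (h.feasible.nonneg i) _
  · rfl

theorem IsOptimal.fiberAverage_power (h : IsOptimal a b σ p r μ l) :
    IsOptimal a b σ p r (fiberAverage l μ) l := by
  obtain ⟨⟨hnonneg, hpower, hrelay⟩, hle⟩ := h
  have hpower' : ∑ i, fiberAverage l μ i = ∑ i, μ i := by
    simpa using sum_mul_fiberAverage l μ (fun _ => 1)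
  have hrelay' :
      ∑ i, relayCost a σ (fiberAverage l μ i) (l i) = ∑ i, relayCost a σ (μ i) (l i) := by
    have hlin (m t : ℝ) : relayCost a σ m t = a ^ 2 * t ^ 2 * m + σ ^ 2 * t ^ 2 := by
      rw [relayCost]; ring
    simp only [hlin, sum_add_distrib, sum_mul_fiberAverage l μ (fun t => a ^ 2 * t ^ 2)]
  have hrate : totalRate a b σ μ l ≤ totalRate a b σ (fiberAverage l μ) l :=
    sum_le_sum_fiberAverage (fun t m => rate a b σ m t) (concaveOn_rate a b σ) hnonneg
  exact ⟨⟨fiberAverage_nonneg hnonneg, hpower' ▸ hpower, hrelay' ▸ hrelay⟩,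
    fun μ' l' h' => (hle μ' l' h').trans hrate⟩

theorem IsOptimal.pair_le [DecidableEq ι] (h : IsOptimal a b σ p r μ l) {i j : ι} (hij : i ≠ j)
    (w₁ w₂ u₁ u₂ : ℝ) (hw₁ : 0 ≤ w₁) (hw₂ : 0 ≤ w₂) (hpower : w₁ + w₂ = μ i + μ j)
    (hrelay : relayCost a σ w₁ u₁ + relayCost a σ w₂ u₂
      = relayCost a σ (μ i) (l i) + relayCost a σ (μ j) (l j)) :
    rate a b σ w₁ u₁ + rate a b σ w₂ u₂ ≤ rate a b σ (μ i) (l i) + rate a b σ (μ j) (l j) := by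
  set μ' := Function.update (Function.update μ i w₁) j w₂
  set l' := Function.update (Function.update l i u₁) j u₂
  have hfeas : Feasible a σ p r μ' l' := by
    obtain ⟨hnonneg, hpow, hrel⟩ := h.feasible
    refine ⟨fun k => ?_, ?_, ?_⟩
    · simp only [μ', Function.update_apply]
      split_ifs
      exacts [hw₂, hw₁, hnonneg k]
    · have := sum_update_update (fun m (_ : ℝ) => m) μ l hij w₁ w₂ u₁ u₂
      linarith
    · have := sum_update_update (relayCost a σ) μ l hij w₁ w₂ u₁ u₂
      linarith
  have := h.le μ' l' hfeas
  have hsum := sum_update_update (rate a b σ) μ l hij w₁ w₂ u₁ u₂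
  simp only [totalRate] at this
  linarith

theorem IsOptimal.exists_satisfiesKKT (h : IsOptimal a b σ p r μ l) (hσ : 0 < σ) {i₀ : ι}
    (hμ₀ : 0 < μ i₀) (hl₀ : l i₀ ≠ 0) :
    ∃ ν η, ∀ j, 0 < μ j → SatisfiesKKT a b σ ν η (μ j) (l j) := by
  classical
  have hD₀ : 0 < a ^ 2 * μ i₀ + σ ^ 2 := by positivity
  set η := rateDerivGain a b σ (μ i₀) (l i₀) / (2 * (a ^ 2 * μ i₀ + σ ^ 2) * l i₀)
  refine ⟨rateDerivPower a b σ (μ i₀) (l i₀) - η * a ^ 2 * l i₀ ^ 2, η, fun j hμj => ?_⟩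
  have hpair (x y : ℝ) : 2 * l i₀ * (a ^ 2 * μ i₀ + σ ^ 2) *
        (x * (rateDerivPower a b σ (μ j) (l j) - rateDerivPower a b σ (μ i₀) (l i₀))
          + y * rateDerivGain a b σ (μ j) (l j))
      + rateDerivGain a b σ (μ i₀) (l i₀) *
        (a ^ 2 * x * (l i₀ ^ 2 - l j ^ 2) - 2 * (a ^ 2 * μ j + σ ^ 2) * l j * y) = 0 := by
    rcases eq_or_ne i₀ j with rfl | hne
    · ring
    · exact pair_stationary a b σ hσ hμ₀ hμj hl₀ (h.pair_le hne) x y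
  constructor
  · have := hpair 1 0
    simp only [η]
    field_simp
    linear_combination this
  · have := hpair 0 1
    simp only [η]
    field_simp
    linear_combination this / 2

theorem IsOptimal.card_filter_ne_zero_le_seven (h : IsOptimal a b σ p r μ l)
    (hab : a * b ≠ 0) (hσ : 0 < σ) (hidle : ∀ i, μ i = 0 → l i = 0) :
    #((univ.image l).filter (· ≠ 0)) ≤ 7 := by
  have hactive : ∀ i, l i ≠ 0 → 0 < μ i := fun i hl =>
    (h.feasible.nonneg i).lt_of_ne fun hμ => hl (hidle i hμ.symm)
  rcases ((univ.image l).filter (· ≠ 0)).eq_empty_or_nonempty with hempty | ⟨t₀, ht₀⟩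
  · simp [hempty]
  rw [mem_filter, mem_image] at ht₀
  obtain ⟨⟨i₀, -, rfl⟩, hl₀⟩ := ht₀
  obtain ⟨ν, η, hkkt⟩ := h.exists_satisfiesKKT hσ (hactive i₀ hl₀) hl₀
  refine card_le_seven_of_satisfiesKKT (ν := ν) (η := η) hab hσ.ne' fun t ht => ?_
  rw [mem_filter, mem_image] at ht
  obtain ⟨⟨i, -, rfl⟩, hi⟩ := ht
  exact ⟨μ i, hactive i hi, hkkt i (hactive i hi)⟩

end LTIRelay

theorem lti_maximizer_eight_modes_real_general (a b : ℝ) (hab : a * b ≠ 0) (σ P γ : ℝ)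
    (hσ : 0 < σ) (hP : 0 < P) (hγ : 0 < γ) (n : ℕ) :
    ∃ (μ : Fin n → ℝ) (l : Fin n → ℝ),
      (∀ i, 0 ≤ μ i) ∧ (∑ i, μ i ≤ (n : ℝ) * P) ∧
      (∑ i, (a ^ 2 * μ i + σ ^ 2) * (l i) ^ 2 ≤ (n : ℝ) * γ * P) ∧
      (∀ (μ' : Fin n → ℝ) (l' : Fin n → ℝ), (∀ i, 0 ≤ μ' i) →
        (∑ i, μ' i ≤ (n : ℝ) * P) →
        (∑ i, (a ^ 2 * μ' i + σ ^ 2) * (l' i) ^ 2 ≤ (n : ℝ) * γ * P) →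
        (1 / (2 * (n : ℝ))) * ∑ i, Real.log
            (1 + (μ' i / σ ^ 2) * (1 + a * b * l' i) ^ 2 / (1 + b ^ 2 * (l' i) ^ 2))
          ≤ (1 / (2 * (n : ℝ))) * ∑ i, Real.log
            (1 + (μ i / σ ^ 2) * (1 + a * b * l i) ^ 2 / (1 + b ^ 2 * (l i) ^ 2))) ∧
      (Finset.image l Finset.univ).card ≤ 8 ∧
      ((Finset.image l Finset.univ).filter (· ≠ 0)).card ≤ 7 ∧
      (∀ i j, l i = l j → μ i = μ j) := by
  obtain ⟨μ₀, l₀, hopt₀⟩ := LTIRelay.exists_isOptimal (ι := Fin n) (p := n * P) (r := n * γ * P)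
    a b hσ.ne' (by positivity) (by positivity)
  set l := fun i => if μ₀ i = 0 then 0 else l₀ i
  have hopt := hopt₀.zero_idle_gains
  have hnonzero : ((Finset.image l Finset.univ).filter (· ≠ 0)).card ≤ 7 :=
    hopt.card_filter_ne_zero_le_seven hab hσ fun i hi => if_pos hi
  obtain ⟨⟨hnonneg, hpower, hrelay⟩, hle⟩ := hopt.fiberAverage_power
  refine ⟨LTIRelay.fiberAverage l μ₀, l, hnonneg, hpower, hrelay,
    fun μ' l' h₁ h₂ h₃ => mul_le_mul_of_nonneg_left (hle μ' l' ⟨h₁, h₂, h₃⟩) (by positivity),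
    ?_, hnonzero, fun i j h => LTIRelay.fiberAverage_eq_of_eq h⟩
  rw [Finset.filter_ne'] at hnonzero
  have := Finset.pred_card_le_card_erase (s := Finset.image l Finset.univ) (a := 0)
  omega

/-- Structural reduction for real (symmetric) LTI relaying over `n` frequency
bins: the rate maximization admits a maximizer whose real relay gains take at
most 8 distinct values, at most 7 of them nonzero, with equal source power in
bins sharing the same gain. -/
theorem lti_maximizer_eight_modes_real (a b : ℝ) (hab : a * b ≠ 0) (σ P γ : ℝ)
    (hσ : 0 < σ) (hP : 0 < P) (hγ : 0 < γ) (n : ℕ) (hn : 0 < n) :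
    ∃ (μ : Fin n → ℝ) (l : Fin n → ℝ),
      (∀ i, 0 ≤ μ i) ∧ (∑ i, μ i ≤ (n : ℝ) * P) ∧
      (∑ i, (a ^ 2 * μ i + σ ^ 2) * (l i) ^ 2 ≤ (n : ℝ) * γ * P) ∧
      (∀ (μ' : Fin n → ℝ) (l' : Fin n → ℝ), (∀ i, 0 ≤ μ' i) →
        (∑ i, μ' i ≤ (n : ℝ) * P) →
        (∑ i, (a ^ 2 * μ' i + σ ^ 2) * (l' i) ^ 2 ≤ (n : ℝ) * γ * P) →
        (1 / (2 * (n : ℝ))) * ∑ i, Real.log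
            (1 + (μ' i / σ ^ 2) * (1 + a * b * l' i) ^ 2 / (1 + b ^ 2 * (l' i) ^ 2))
          ≤ (1 / (2 * (n : ℝ))) * ∑ i, Real.log
            (1 + (μ i / σ ^ 2) * (1 + a * b * l i) ^ 2 / (1 + b ^ 2 * (l i) ^ 2))) ∧
      (Finset.image l Finset.univ).card ≤ 8 ∧
      ((Finset.image l Finset.univ).filter (· ≠ 0)).card ≤ 7 ∧
      (∀ i j, l i = l j → μ i = μ j) :=
  lti_maximizer_eight_modes_real_general a b hab σ P γ hσ hP hγ n
end
end

section
/- Fix real numbers a, b with ab ≠ 0 and σ > 0, P > 0, γ > 0, and let 𝒞(x) := (1/2)log(1+x). For each positive integer n define F_n := max{ (1/2n) Σ_{i=1}^n log(1 + (μ_i/σ²)·|1+abλ_i|²/(1+b²|λ_i|²)) : μ ∈ ℝⁿ, λ ∈ ℂⁿ, μ_i ≥ 0 for all i, Σ_{i=1}^n μ_i ≤ nP, Σ_{i=1}^n (a²μ_i + σ²)|λ_i|² ≤ nγP }. Define C₈ := sup over τ ∈ ℝ^{8}, θ ∈ ℝ^{8}, λ̄ ∈ ℝ^{7} (indexed j =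 0,…,7 for τ, θ and j = 1,…,7 for λ̄) with τ_j ≥ 0, θ_j ≥ 0, Σ_{j=0}^{7} τ_j = 1, Σ_{j=0}^{7} θ_j = 1, θ_j = 0 whenever τ_j = 0, and Σ_{j=1}^{7} λ̄_j²(a²θ_j P + τ_j σ²) ≤ γP, of the quantity τ₀·𝒞(θ₀P/(τ₀σ²)) + Σ_{j=1}^{7} τ_j·𝒞((θ_j/τ_j)·(P/σ²)·(1+abλ̄_j)²/(1+b²λ̄_j²)), where any term with τ_j = 0 is taken to be 0. Then lim_{n→∞} F_n = C₈. -/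
/-!
Write `r(m, t) = log (1 + (m / σ²) (1 + abt)² / (1 + b²t²))` for the rate of a bin carrying source
power `m` through a relay with real gain `t`, and `c(m, t) = (a²m + σ²) t²` for the relay power it
costs. Both sides of the limit are suprema of time sharings between such modes.

Upper bound: the complex gain `λ` can be replaced by the real gain `±|λ|`, with the sign of `ab`;
this keeps the relay power and can only increase `|1 + abλ|²`. An `n`-bin scheme is then a uniform
time sharing of `n` real modes, and by Carathéodory's theorem applied to the profiles
`(r, m, c) ∈ ℝ³` four modes achieve the same totals. Handing a bandwidth `ε` to direct transmission
of the unused source power turns this into a point of `C₈` losing at most a factor `1 - ε`.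

Lower bound: a time sharing `(τⱼ, ρⱼ, Lⱼ)` is realised on `n` bins by giving `⌊nτⱼ⌋` bins to mode
`j`, which loses at most `Σⱼ r(ρⱼ, Lⱼ) / 2n`.
-/

open Filter Finset Function

noncomputable section

def binRate (a b σ m : ℝ) (l : ℂ) : ℝ :=
  Real.log (1 + (m / σ ^ 2) * ‖1 + ((a * b : ℝ) : ℂ) * l‖ ^ 2 / (1 + b ^ 2 * ‖l‖ ^ 2))

/-- `Fₙ` is `sSup (binRateSet a b σ P γ n)` and `C₈` is `sSup (eightModeRateSet a b σ P γ)`. -/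
def binRateSet (a b σ P γ : ℝ) (n : ℕ) : Set ℝ :=
  {x | ∃ (μ : Fin n → ℝ) (l : Fin n → ℂ), (∀ i, 0 ≤ μ i) ∧ (∑ i, μ i ≤ (n : ℝ) * P) ∧
    (∑ i, (a ^ 2 * μ i + σ ^ 2) * ‖l i‖ ^ 2 ≤ (n : ℝ) * γ * P) ∧
    x = (1 / (2 * (n : ℝ))) * ∑ i, binRate a b σ (μ i) (l i)}

def eightModeRateSet (a b σ P γ : ℝ) : Set ℝ :=
  {x | ∃ (τ θ : Fin 8 → ℝ) (lb : Fin 7 → ℝ),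
    (∀ j, 0 ≤ τ j) ∧ (∀ j, 0 ≤ θ j) ∧
    (∑ j, τ j = 1) ∧ (∑ j, θ j = 1) ∧
    (∀ j, τ j = 0 → θ j = 0) ∧
    (∑ j : Fin 7, (lb j) ^ 2 * (a ^ 2 * θ j.succ * P + τ j.succ * σ ^ 2) ≤ γ * P) ∧
    x = τ 0 * ((1 / 2) * Real.log (1 + θ 0 * P / (τ 0 * σ ^ 2)))
      + ∑ j : Fin 7, τ j.succ * ((1 / 2) * Real.log
          (1 + (θ j.succ / τ j.succ) * (P / σ ^ 2)
            * (1 + a * b * lb j) ^ 2 / (1 + b ^ 2 * (lb j) ^ 2)))}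

def relayRate (a b σ m t : ℝ) : ℝ :=
  Real.log (1 + m / σ ^ 2 * (1 + a * b * t) ^ 2 / (1 + b ^ 2 * t ^ 2))

def relayCost (a σ m t : ℝ) : ℝ := (a ^ 2 * m + σ ^ 2) * t ^ 2

def relayProfile (a b σ m t : ℝ) : ℝ × ℝ × ℝ := (relayRate a b σ m t, m, relayCost a σ m t)

/-- Mode `j` gets the bandwidth fraction `τ j`, in which the source sends with power density
`ρ j` and the relay amplifies with the real gain `L j`. -/
def sharingRate {ι : Type*} [Fintype ι] (a b σ : ℝ) (τ ρ L : ι → ℝ) : ℝ :=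
  (1 / 2) * ∑ j, τ j * relayRate a b σ (ρ j) (L j)

structure IsFeasibleSharing {ι : Type*} [Fintype ι] (a σ P γ : ℝ) (τ ρ L : ι → ℝ) : Prop where
  bandwidth_nonneg : ∀ j, 0 ≤ τ j
  power_nonneg : ∀ j, 0 ≤ ρ j
  sum_bandwidth : ∑ j, τ j = 1
  power_le : ∑ j, τ j * ρ j ≤ P
  cost_le : ∑ j, τ j * relayCost a σ (ρ j) (L j) ≤ γ * P

end

section RelayRate

variable (a b σ : ℝ)

lemma relayRate_nonneg {m : ℝ} (hm : 0 ≤ m) (t : ℝ) : 0 ≤ relayRate a b σ m t :=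
  Real.log_nonneg (le_add_of_nonneg_right (by positivity))

lemma relayRate_mono {m m' : ℝ} (hm : 0 ≤ m) (h : m ≤ m') (t : ℝ) :
    relayRate a b σ m t ≤ relayRate a b σ m' t := by
  unfold relayRate
  gcongr

lemma sq_one_add_mul_le (t : ℝ) : (1 + a * b * t) ^ 2 ≤ (1 + a ^ 2) * (1 + b ^ 2 * t ^ 2) := by
  nlinarith [sq_nonneg (a - b * t)]

lemma relayRate_le {m : ℝ} (hm : 0 ≤ m) (t : ℝ) :
    relayRate a b σ m t ≤ (1 + a ^ 2) * m / σ ^ 2 := by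
  have hden : 0 < 1 + b ^ 2 * t ^ 2 := by positivity
  calc relayRate a b σ m t ≤ m / σ ^ 2 * (1 + a * b * t) ^ 2 / (1 + b ^ 2 * t ^ 2) := by
        unfold relayRate
        linarith [Real.log_le_sub_one_of_pos
          (by positivity : 0 < 1 + m / σ ^ 2 * (1 + a * b * t) ^ 2 / (1 + b ^ 2 * t ^ 2))]
    _ ≤ m / σ ^ 2 * ((1 + a ^ 2) * (1 + b ^ 2 * t ^ 2)) / (1 + b ^ 2 * t ^ 2) := by
        gcongr
        exact sq_one_add_mul_le a b t
    _ = (1 + a ^ 2) * m / σ ^ 2 := by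
        rw [mul_div_assoc, mul_div_cancel_right₀ _ hden.ne']
        ring

lemma sub_one_mul_relayRate_le {k s ρ : ℝ} (hk : 0 ≤ k) (hks : k ≤ s) (hsk : s ≤ k + 1)
    (hρ : 0 ≤ ρ) (t : ℝ) :
    (s - 1) * relayRate a b σ ρ t ≤ k * relayRate a b σ (s * ρ / k) t := by
  have hr := relayRate_nonneg a b σ hρ t
  rcases hk.eq_or_lt with rfl | hk
  · nlinarith
  · calc (s - 1) * relayRate a b σ ρ t ≤ k * relayRate a b σ ρ t :=
          mul_le_mul_of_nonneg_right (by linarith) hr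
      _ ≤ k * relayRate a b σ (s * ρ / k) t := by
          refine mul_le_mul_of_nonneg_left (relayRate_mono a b σ hρ ?_ t) hk.le
          rw [le_div_iff₀ hk]
          nlinarith

lemma mul_relayCost_div_le {k s m : ℝ} (hk : 0 ≤ k) (hks : k ≤ s) (hm : 0 ≤ m) (t : ℝ) :
    k * relayCost a σ (s * m / k) t ≤ s * relayCost a σ m t := by
  unfold relayCost
  rcases hk.eq_or_lt with rfl | hk
  · simp only [zero_mul]
    positivity
  · have : k * ((a ^ 2 * (s * m / k) + σ ^ 2) * t ^ 2) = (a ^ 2 * s * m + k * σ ^ 2) * t ^ 2 := by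
      field_simp
    rw [this]
    nlinarith [mul_le_mul_of_nonneg_right hks (mul_nonneg (sq_nonneg σ) (sq_nonneg t))]

lemma binRate_ofReal (m t : ℝ) : binRate a b σ m t = relayRate a b σ m t := by
  have h : 1 + ((a * b : ℝ) : ℂ) * t = ((1 + a * b * t : ℝ) : ℂ) := by push_cast; ring
  simp only [binRate, relayRate, h, Complex.norm_real, Real.norm_eq_abs, sq_abs]

lemma exists_real_gain (c : ℝ) (l : ℂ) :
    ∃ t : ℝ, t ^ 2 = ‖l‖ ^ 2 ∧ ‖1 + (c : ℂ) * l‖ ^ 2 ≤ (1 + c * t) ^ 2 := by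
  refine ⟨if 0 ≤ c then ‖l‖ else -‖l‖, by split_ifs <;> simp, ?_⟩
  have hct : c * (if 0 ≤ c then ‖l‖ else -‖l‖) = |c| * ‖l‖ := by
    split_ifs with h
    · rw [abs_of_nonneg h]
    · rw [abs_of_neg (not_le.1 h)]
      ring
  rw [hct]
  gcongr
  calc ‖1 + (c : ℂ) * l‖ ≤ ‖(1 : ℂ)‖ + ‖(c : ℂ) * l‖ := norm_add_le _ _
    _ = 1 + |c| * ‖l‖ := by rw [norm_one, norm_mul, Complex.norm_real, Real.norm_eq_abs]

lemma exists_binRate_le_relayRate {m : ℝ} (hm : 0 ≤ m) (l : ℂ) :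
    ∃ t : ℝ, t ^ 2 = ‖l‖ ^ 2 ∧ binRate a b σ m l ≤ relayRate a b σ m t := by
  obtain ⟨t, ht, hle⟩ := exists_real_gain (a * b) l
  refine ⟨t, ht, Real.log_le_log (by positivity) ?_⟩
  rw [← ht]
  gcongr

end RelayRate

lemma sum_extend_zero {ι κ α M : Type*} [Fintype ι] [Fintype κ] [Zero α] [AddCommMonoid M]
    (e : ι ↪ κ) (f : ι → α) (G : α → M) (hG : G 0 = 0) :
    ∑ j, G (extend e f 0 j) = ∑ i, G (f i) := by
  refine (Fintype.sum_of_injective e e.injective _ _ (fun j hj => ?_) fun i => ?_).symm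
  · rw [extend_apply' _ _ _ (by simpa using hj), Pi.zero_apply, hG]
  · rw [e.injective.extend_apply]

lemma forall_extend_zero {ι κ α : Type*} [Zero α] {p : α → Prop} (e : ι ↪ κ) {f : ι → α}
    (h0 : p 0) (hf : ∀ i, p (f i)) (j : κ) : p (extend e f 0 j) := by
  by_cases hj : ∃ i, e i = j
  · obtain ⟨i, rfl⟩ := hj
    rw [e.injective.extend_apply]
    exact hf i
  · rwa [extend_apply' _ _ _ hj]

lemma sum_floor_mul_le {ι : Type*} [Fintype ι] {τ : ι → ℝ} (hτ : ∀ j, 0 ≤ τ j)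
    (h1 : ∑ j, τ j = 1) (n : ℕ) : ∑ j, ⌊n * τ j⌋₊ ≤ n := by
  have : ((∑ j, ⌊n * τ j⌋₊ : ℕ) : ℝ) ≤ n := by
    push_cast
    calc ∑ j, (⌊n * τ j⌋₊ : ℝ) ≤ ∑ j, n * τ j :=
          sum_le_sum fun j _ => Nat.floor_le (mul_nonneg n.cast_nonneg (hτ j))
      _ = n := by rw [← mul_sum, h1, mul_one]
  exact_mod_cast this

lemma mul_div_le_of_nonneg {k s : ℝ} (hk : 0 ≤ k) (hs : 0 ≤ s) : k * (s / k) ≤ s := by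
  rcases hk.eq_or_lt with rfl | hk
  · simpa using hs
  · rw [mul_div_cancel₀ _ hk.ne']

section Sharing

variable {ι κ : Type*} [Fintype ι] [Fintype κ] {a σ P γ : ℝ} (b : ℝ) {τ ρ L : ι → ℝ}

namespace IsFeasibleSharing

lemma sharingRate_le (h : IsFeasibleSharing a σ P γ τ ρ L) :
    sharingRate a b σ τ ρ L ≤ (1 + a ^ 2) * P / (2 * σ ^ 2) := by
  calc sharingRate a b σ τ ρ L
      ≤ (1 / 2) * ∑ j, τ j * ((1 + a ^ 2) * ρ j / σ ^ 2) :=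
        mul_le_mul_of_nonneg_left (sum_le_sum fun j _ => mul_le_mul_of_nonneg_left
          (relayRate_le a b σ (h.power_nonneg j) (L j)) (h.bandwidth_nonneg j)) (by norm_num)
    _ = (1 + a ^ 2) / (2 * σ ^ 2) * ∑ j, τ j * ρ j := by
        rw [mul_sum, mul_sum]
        congr 1
        ext j
        ring
    _ ≤ (1 + a ^ 2) / (2 * σ ^ 2) * P := by
        gcongr
        exact h.power_le
    _ = (1 + a ^ 2) * P / (2 * σ ^ 2) := by ring

lemma exists_reindex (h : IsFeasibleSharing a σ P γ τ ρ L) (e : ι ↪ κ) :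
    ∃ τ' ρ' L' : κ → ℝ, IsFeasibleSharing a σ P γ τ' ρ' L' ∧
      sharingRate a b σ τ' ρ' L' = sharingRate a b σ τ ρ L := by
  set g := extend e (fun i => (τ i, ρ i, L i)) 0
  have hsum := sum_extend_zero (M := ℝ) e (fun i => (τ i, ρ i, L i))
  refine ⟨fun j => (g j).1, fun j => (g j).2.1, fun j => (g j).2.2, ⟨?_, ?_, ?_, ?_, ?_⟩, ?_⟩
  · exact forall_extend_zero e (p := fun q : ℝ × ℝ × ℝ => 0 ≤ q.1) le_rfl h.bandwidth_nonneg
  · exact forall_extend_zero e (p := fun q : ℝ × ℝ × ℝ => 0 ≤ q.2.1) le_rfl h.power_nonneg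
  · rw [hsum Prod.fst rfl]
    exact h.sum_bandwidth
  · rw [hsum (fun q => q.1 * q.2.1) (zero_mul _)]
    exact h.power_le
  · rw [hsum (fun q => q.1 * relayCost a σ q.2.1 q.2.2) (zero_mul _)]
    exact h.cost_le
  · rw [sharingRate, hsum (fun q => q.1 * relayRate a b σ q.2.1 q.2.2) (zero_mul _), sharingRate]

/-- Carathéodory's theorem for the profiles `relayProfile a b σ (ρ j) (L j) ∈ ℝ³`. -/
lemma exists_fin_of_four_le (h : IsFeasibleSharing a σ P γ τ ρ L) {k : ℕ} (hk : 4 ≤ k) :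
    ∃ τ' ρ' L' : Fin k → ℝ, IsFeasibleSharing a σ P γ τ' ρ' L' ∧
      sharingRate a b σ τ' ρ' L' = sharingRate a b σ τ ρ L := by
  set S := {p | ∃ m t, 0 ≤ m ∧ relayProfile a b σ m t = p}
  have hp : ∑ j, τ j • relayProfile a b σ (ρ j) (L j) ∈ convexHull ℝ S :=
    (convex_convexHull ℝ S).sum_mem (fun j _ => h.bandwidth_nonneg j) h.sum_bandwidth
      fun j _ => subset_convexHull ℝ S ⟨ρ j, L j, h.power_nonneg j, rfl⟩
  obtain ⟨ι', _, z, w, hzS, hz, hw, hw1, hwz⟩ := eq_pos_convex_span_of_mem_convexHull hp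
  choose m t hm hmt using fun i => hzS ⟨i, rfl⟩
  have hcard : Fintype.card ι' ≤ Fintype.card (Fin k) := by
    have := hz.card_le_finrank_succ
    have := Submodule.finrank_le (vectorSpan ℝ (Set.range z))
    simp only [Module.finrank_prod, Module.finrank_self, Fintype.card_fin] at *
    omega
  obtain ⟨e⟩ := Function.Embedding.nonempty_of_card_le hcard
  simp only [← hmt, relayProfile] at hwz
  have hrate := congrArg Prod.fst hwz
  have hpower := congrArg (fun p => p.2.1) hwz
  have hcost := congrArg (fun p => p.2.2) hwz
  simp only [Prod.fst_sum, Prod.snd_sum, Prod.smul_mk, smul_eq_mul] at hrate hpower hcost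
  have hw : IsFeasibleSharing a σ P γ w m t :=
    ⟨fun i => (hw i).le, hm, hw1, hpower ▸ h.power_le, hcost ▸ h.cost_le⟩
  obtain ⟨τ', ρ', L', h', hrate'⟩ := hw.exists_reindex b e
  exact ⟨τ', ρ', L', h', by rw [hrate', sharingRate, hrate, sharingRate]⟩

end IsFeasibleSharing

lemma exists_sharing_of_mem_binRateSet {n : ℕ} (hn : 0 < n) {x : ℝ}
    (hx : x ∈ binRateSet a b σ P γ n) :
    ∃ τ ρ L : Fin n → ℝ, IsFeasibleSharing a σ P γ τ ρ L ∧ x ≤ sharingRate a b σ τ ρ L := by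
  obtain ⟨μ, l, hμ, hpow, hcost, rfl⟩ := hx
  choose t ht hrate using fun i => exists_binRate_le_relayRate a b σ (hμ i) (l i)
  have hn' : (0 : ℝ) < n := Nat.cast_pos.2 hn
  refine ⟨fun _ => 1 / n, μ, t, ⟨fun _ => by positivity, hμ, ?_, ?_, ?_⟩, ?_⟩
  · simp [hn'.ne']
  · rw [← mul_sum, one_div, inv_mul_le_iff₀ hn']
    exact hpow
  · simp only [relayCost, ht]
    rw [← mul_sum, one_div, inv_mul_le_iff₀ hn', ← mul_assoc]
    exact hcost
  · rw [sharingRate, ← mul_sum, ← mul_assoc, one_div_mul_one_div]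
    gcongr with i
    exact hrate i

lemma bddAbove_binRateSet {n : ℕ} (hn : 0 < n) : BddAbove (binRateSet a b σ P γ n) :=
  ⟨(1 + a ^ 2) * P / (2 * σ ^ 2), fun x hx => by
    obtain ⟨τ, ρ, L, h, hle⟩ := exists_sharing_of_mem_binRateSet b hn hx
    exact hle.trans (h.sharingRate_le b)⟩

namespace IsFeasibleSharing

lemma exists_mem_binRateSet (h : IsFeasibleSharing a σ P γ τ ρ L) {n : ℕ} (hn : 0 < n) :
    ∃ x ∈ binRateSet a b σ P γ n,
      sharingRate a b σ τ ρ L - (∑ j, relayRate a b σ (ρ j) (L j)) / (2 * n) ≤ x := by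
  have hτ := h.bandwidth_nonneg
  have hρ := h.power_nonneg
  set k : ι → ℕ := fun j => ⌊n * τ j⌋₊
  have hk_le : ∀ j, (k j : ℝ) ≤ n * τ j := fun j => Nat.floor_le (by have := hτ j; positivity)
  have hk_ge : ∀ j, n * τ j ≤ k j + 1 := fun j => (Nat.lt_floor_add_one _).le
  obtain ⟨e⟩ := Function.Embedding.nonempty_of_card_le (α := Σ j, Fin (k j)) (β := Fin n)
    (by simpa using sum_floor_mul_le hτ h.sum_bandwidth n)
  set B := extend e (fun p => (n * τ p.1 * ρ p.1 / k p.1, (L p.1 : ℂ))) 0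
  have hsum : ∀ G : ℝ × ℂ → ℝ, G 0 = 0 →
      ∑ i, G (B i) = ∑ j, k j * G (n * τ j * ρ j / k j, L j) := fun G hG => by
    rw [sum_extend_zero e _ G hG, Fintype.sum_sigma]
    simp
  refine ⟨_, ⟨fun i => (B i).1, fun i => (B i).2, forall_extend_zero e
    (p := fun q : ℝ × ℂ => 0 ≤ q.1) le_rfl fun p => by have := hτ p.1; have := hρ p.1; positivity,
    ?_, ?_, rfl⟩, ?_⟩
  · rw [hsum Prod.fst rfl]
    calc ∑ j, k j * (n * τ j * ρ j / k j) ≤ ∑ j, n * τ j * ρ j := sum_le_sum fun j _ =>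
          mul_div_le_of_nonneg (Nat.cast_nonneg _) (by have := hτ j; have := hρ j; positivity)
      _ ≤ n * P := by
          simp only [mul_assoc, ← mul_sum]
          gcongr
          exact h.power_le
  · rw [hsum (fun q => (a ^ 2 * q.1 + σ ^ 2) * ‖q.2‖ ^ 2) (by simp)]
    simp only [Complex.norm_real, Real.norm_eq_abs, sq_abs]
    calc ∑ j, (k j : ℝ) * ((a ^ 2 * (n * τ j * ρ j / k j) + σ ^ 2) * L j ^ 2)
        ≤ ∑ j, n * τ j * relayCost a σ (ρ j) (L j) := sum_le_sum fun j _ =>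
          mul_relayCost_div_le a σ (Nat.cast_nonneg (k j)) (hk_le j) (hρ j) (L j)
      _ ≤ n * (γ * P) := by
          simp only [mul_assoc, ← mul_sum]
          gcongr
          exact h.cost_le
      _ = n * γ * P := by ring
  · rw [hsum (fun q => binRate a b σ q.1 q.2) (by simp [binRate])]
    simp only [binRate_ofReal]
    calc sharingRate a b σ τ ρ L - (∑ j, relayRate a b σ (ρ j) (L j)) / (2 * n)
        = 1 / (2 * n) * ∑ j, (n * τ j - 1) * relayRate a b σ (ρ j) (L j) := by
          simp only [sharingRate, sub_mul, sum_sub_distrib, one_mul, mul_assoc, ← mul_sum]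
          field_simp
      _ ≤ 1 / (2 * n) * ∑ j, k j * relayRate a b σ (n * τ j * ρ j / k j) (L j) :=
          mul_le_mul_of_nonneg_left (sum_le_sum fun j _ => sub_one_mul_relayRate_le a b σ
            (Nat.cast_nonneg _) (hk_le j) (hk_ge j) (hρ j) (L j)) (by positivity)

lemma eventually_lt_sSup_binRateSet (h : IsFeasibleSharing a σ P γ τ ρ L) {v : ℝ}
    (hv : v < sharingRate a b σ τ ρ L) : ∀ᶠ n in atTop, v < sSup (binRateSet a b σ P γ n) := by
  set K := ∑ j, relayRate a b σ (ρ j) (L j)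
  have hlim : Tendsto (fun n : ℕ => sharingRate a b σ τ ρ L - K / (2 * n)) atTop
      (nhds (sharingRate a b σ τ ρ L)) := by
    have := tendsto_const_div_atTop_nhds_zero_nat (K / 2)
    simp only [div_div] at this
    simpa using tendsto_const_nhds.sub this
  filter_upwards [hlim.eventually (lt_mem_nhds hv), eventually_gt_atTop 0] with n hvn hn
  obtain ⟨x, hx, hle⟩ := h.exists_mem_binRateSet b hn
  exact hvn.trans_le (hle.trans (le_csSup (bddAbove_binRateSet b hn) hx))

end IsFeasibleSharing

end Sharing

section EightModes

variable {a σ P γ : ℝ} (b : ℝ)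

/-- Mode `0` is direct transmission in the bandwidth `ε`, carrying the source power left unused;
the relay modes are squeezed into the bandwidth `1 - ε` at the same total power. -/
lemma IsFeasibleSharing.exists_cons_direct {k : ℕ} {τ ρ L : Fin k → ℝ}
    (h : IsFeasibleSharing a σ P γ τ ρ L) {ε : ℝ} (hε0 : 0 < ε) (hε1 : ε < 1) :
    ∃ τ' ρ' L' : Fin (k + 1) → ℝ, IsFeasibleSharing a σ P γ τ' ρ' L' ∧
      ∑ j, τ' j * ρ' j = P ∧ L' 0 = 0 ∧
      (1 - ε) * sharingRate a b σ τ ρ L ≤ sharingRate a b σ τ' ρ' L' := by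
  have hε : 0 < 1 - ε := sub_pos.2 hε1
  set τ' : Fin (k + 1) → ℝ := Fin.cons ε fun j => (1 - ε) * τ j
  set ρ' : Fin (k + 1) → ℝ := Fin.cons ((P - ∑ j, τ j * ρ j) / ε) fun j => ρ j / (1 - ε)
  have hpow : ∑ j, τ' j * ρ' j = P := by
    have hterm : ∀ j, (1 - ε) * τ j * (ρ j / (1 - ε)) = τ j * ρ j := fun j => by field_simp
    simp only [τ', ρ', Fin.sum_univ_succ, Fin.cons_zero, Fin.cons_succ, hterm]
    field_simp
    ring
  refine ⟨τ', ρ', Fin.cons 0 L, ⟨?_, ?_, ?_, hpow.le, ?_⟩, hpow, rfl, ?_⟩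
  · exact Fin.cases hε0.le fun j => mul_nonneg hε.le (h.bandwidth_nonneg j)
  · exact Fin.cases (div_nonneg (sub_nonneg.2 h.power_le) hε0.le)
      fun j => div_nonneg (h.power_nonneg j) hε.le
  · simp only [τ', Fin.sum_univ_succ, Fin.cons_zero, Fin.cons_succ, ← mul_sum, h.sum_bandwidth]
    ring
  · have hterm : ∀ j, (1 - ε) * τ j * relayCost a σ (ρ j / (1 - ε)) (L j)
        ≤ τ j * relayCost a σ (ρ j) (L j) := fun j => by
      have := mul_relayCost_div_le a σ hε.le (by linarith : 1 - ε ≤ 1) (h.power_nonneg j) (L j)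
      rw [one_mul, one_mul] at this
      rw [mul_comm (1 - ε), mul_assoc]
      exact mul_le_mul_of_nonneg_left this (h.bandwidth_nonneg j)
    simp only [τ', ρ', Fin.sum_univ_succ, Fin.cons_zero, Fin.cons_succ]
    calc ε * relayCost a σ ((P - ∑ j, τ j * ρ j) / ε) 0
          + ∑ j, (1 - ε) * τ j * relayCost a σ (ρ j / (1 - ε)) (L j)
        ≤ ∑ j, τ j * relayCost a σ (ρ j) (L j) := by
          simpa [relayCost] using sum_le_sum fun j _ => hterm j
      _ ≤ γ * P := h.cost_le
  · have hdirect := relayRate_nonneg a b σ (div_nonneg (sub_nonneg.2 h.power_le) hε0.le) 0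
    have hterm : ∀ j, (1 - ε) * (τ j * relayRate a b σ (ρ j) (L j))
        ≤ (1 - ε) * τ j * relayRate a b σ (ρ j / (1 - ε)) (L j) := fun j => by
      rw [← mul_assoc]
      exact mul_le_mul_of_nonneg_left (relayRate_mono a b σ (h.power_nonneg j)
        (le_div_self (h.power_nonneg j) hε (by linarith)) _)
        (mul_nonneg hε.le (h.bandwidth_nonneg j))
    calc (1 - ε) * sharingRate a b σ τ ρ L
        = 1 / 2 * ∑ j, (1 - ε) * (τ j * relayRate a b σ (ρ j) (L j)) := by
          rw [sharingRate, ← mul_sum]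
          ring
      _ ≤ 1 / 2 * (ε * relayRate a b σ ((P - ∑ j, τ j * ρ j) / ε) 0
          + ∑ j, (1 - ε) * τ j * relayRate a b σ (ρ j / (1 - ε)) (L j)) :=
          mul_le_mul_of_nonneg_left (le_add_of_nonneg_of_le (mul_nonneg hε0.le hdirect)
            (sum_le_sum fun j _ => hterm j)) (by norm_num)
      _ = sharingRate a b σ τ' ρ' (Fin.cons 0 L) := by
          simp only [sharingRate, τ', ρ', Fin.sum_univ_succ, Fin.cons_zero, Fin.cons_succ]

/-- In `eightModeRateSet`, `θ j` is the share of the source power sent in mode `j`, so the power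
density of mode `j` is `θ j / τ j * P`. -/
lemma directRelayObjective_eq_sharingRate {k : ℕ} (τ θ : Fin (k + 1) → ℝ) (lb : Fin k → ℝ) :
    τ 0 * ((1 / 2) * Real.log (1 + θ 0 * P / (τ 0 * σ ^ 2)))
      + ∑ j : Fin k, τ j.succ * ((1 / 2) * Real.log
          (1 + (θ j.succ / τ j.succ) * (P / σ ^ 2)
            * (1 + a * b * lb j) ^ 2 / (1 + b ^ 2 * (lb j) ^ 2)))
    = sharingRate a b σ τ (fun j => θ j / τ j * P) (Fin.cons 0 lb) := by
  rw [sharingRate, Fin.sum_univ_succ, mul_add, mul_sum]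
  simp only [relayRate, Fin.cons_zero, Fin.cons_succ, mul_div_assoc']
  congr 1
  · simp only [mul_zero, add_zero, one_pow, ne_eq, OfNat.ofNat_ne_zero, not_false_eq_true,
      zero_pow, div_one, div_mul_eq_mul_div, div_div]
    ring_nf
  · exact sum_congr rfl fun j _ => by ring

lemma directRelayCost_eq {k : ℕ} {τ θ : Fin (k + 1) → ℝ} (hτθ : ∀ j, τ j = 0 → θ j = 0)
    (lb : Fin k → ℝ) :
    ∑ j : Fin k, (lb j) ^ 2 * (a ^ 2 * θ j.succ * P + τ j.succ * σ ^ 2)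
      = ∑ j, τ j * relayCost a σ (θ j / τ j * P) ((Fin.cons 0 lb : Fin (k + 1) → ℝ) j) := by
  simp only [Fin.sum_univ_succ, Fin.cons_zero, Fin.cons_succ, relayCost]
  simp only [ne_eq, OfNat.ofNat_ne_zero, not_false_eq_true, zero_pow, mul_zero, zero_add]
  refine sum_congr rfl fun j _ => ?_
  linear_combination (-(lb j ^ 2 * a ^ 2 * P)) * mul_div_cancel_of_imp' (hτθ j.succ)

lemma exists_sharing_of_mem_eightModeRateSet (hP : 0 ≤ P) {x : ℝ}
    (hx : x ∈ eightModeRateSet a b σ P γ) :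
    ∃ τ ρ L : Fin 8 → ℝ, IsFeasibleSharing a σ P γ τ ρ L ∧ x = sharingRate a b σ τ ρ L := by
  obtain ⟨τ, θ, lb, hτ, hθ, hτ1, hθ1, hτθ, hcost, rfl⟩ := hx
  refine ⟨τ, fun j => θ j / τ j * P, Fin.cons 0 lb,
    ⟨hτ, fun j => mul_nonneg (div_nonneg (hθ j) (hτ j)) hP, hτ1, ?_, ?_⟩,
    directRelayObjective_eq_sharingRate b τ θ lb⟩
  · simp only [← mul_assoc, mul_div_cancel_of_imp' (hτθ _), ← sum_mul, hθ1, one_mul, le_refl]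
  · rwa [← directRelayCost_eq hτθ]

lemma sharingRate_mem_eightModeRateSet (hP : 0 < P) {τ ρ L : Fin 8 → ℝ}
    (h : IsFeasibleSharing a σ P γ τ ρ L) (hpow : ∑ j, τ j * ρ j = P) (hL : L 0 = 0) :
    sharingRate a b σ τ ρ L ∈ eightModeRateSet a b σ P γ := by
  set θ : Fin 8 → ℝ := fun j => τ j * ρ j / P
  have hτθ : ∀ j, τ j = 0 → θ j = 0 := fun j hj => by simp [θ, hj]
  have hρ : ∀ (f : ℝ → ℝ) j, τ j * f (θ j / τ j * P) = τ j * f (ρ j) := fun f j => by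
    rcases eq_or_ne (τ j) 0 with hj | hj
    · simp [hj]
    · congr 2
      simp only [θ]
      field_simp
  have hL' : (Fin.cons 0 (Fin.tail L) : Fin 8 → ℝ) = L := hL ▸ Fin.cons_self_tail L
  refine ⟨τ, θ, Fin.tail L, h.bandwidth_nonneg,
    fun j => div_nonneg (mul_nonneg (h.bandwidth_nonneg j) (h.power_nonneg j)) hP.le,
    h.sum_bandwidth, by rw [← sum_div, hpow, div_self hP.ne'], hτθ, ?_, ?_⟩
  · rw [directRelayCost_eq hτθ, hL']
    calc _ = _ := sum_congr rfl fun j _ => hρ (relayCost a σ · (L j)) j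
      _ ≤ γ * P := h.cost_le
  · rw [directRelayObjective_eq_sharingRate, hL', sharingRate, sharingRate]
    congr 1
    exact sum_congr rfl fun j _ => (hρ (relayRate a b σ · (L j)) j).symm

lemma bddAbove_eightModeRateSet (hP : 0 ≤ P) : BddAbove (eightModeRateSet a b σ P γ) :=
  ⟨(1 + a ^ 2) * P / (2 * σ ^ 2), fun x hx => by
    obtain ⟨τ, ρ, L, h, rfl⟩ := exists_sharing_of_mem_eightModeRateSet b hP hx
    exact h.sharingRate_le b⟩

lemma eightModeRateSet_nonempty (hP : 0 < P) (hγ : 0 ≤ γ) :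
    (eightModeRateSet a b σ P γ).Nonempty := by
  have h : IsFeasibleSharing a σ P γ (fun _ : Fin 8 => 1 / 8) (fun _ => P) 0 :=
    ⟨fun _ => by norm_num, fun _ => hP.le, by norm_num, by simp, by simp [relayCost]; positivity⟩
  exact ⟨_, sharingRate_mem_eightModeRateSet b hP h (by simp) rfl⟩

lemma IsFeasibleSharing.sharingRate_le_sSup {ι : Type*} [Fintype ι] {τ ρ L : ι → ℝ}
    (hP : 0 < P) (h : IsFeasibleSharing a σ P γ τ ρ L) :
    sharingRate a b σ τ ρ L ≤ sSup (eightModeRateSet a b σ P γ) := by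
  obtain ⟨τ₇, ρ₇, L₇, h₇, hrate⟩ := h.exists_fin_of_four_le b (k := 7) (by norm_num)
  rw [← hrate]
  have hlim : Tendsto (fun ε : ℝ => (1 - ε) * sharingRate a b σ τ₇ ρ₇ L₇)
      (nhdsWithin 0 (Set.Ioi 0)) (nhds (sharingRate a b σ τ₇ ρ₇ L₇)) := by
    refine tendsto_nhdsWithin_of_tendsto_nhds ?_
    have hcont : Continuous fun ε : ℝ => (1 - ε) * sharingRate a b σ τ₇ ρ₇ L₇ := by fun_prop
    simpa using hcont.tendsto 0
  refine le_of_tendsto hlim ?_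
  filter_upwards [Ioo_mem_nhdsGT one_pos] with ε ⟨hε0, hε1⟩
  obtain ⟨τ', ρ', L', h', hpow, hL, hle⟩ := h₇.exists_cons_direct b hε0 hε1
  exact hle.trans (le_csSup (bddAbove_eightModeRateSet b hP.le)
    (sharingRate_mem_eightModeRateSet b hP h' hpow hL))

lemma sSup_binRateSet_le (hP : 0 < P) (hγ : 0 ≤ γ) {n : ℕ} (hn : 0 < n) :
    sSup (binRateSet a b σ P γ n) ≤ sSup (eightModeRateSet a b σ P γ) := by
  refine csSup_le ⟨0, 0, 0, fun _ => le_rfl, ?_, ?_, by simp [binRate]⟩ fun x hx => ?_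
  · simpa using mul_nonneg n.cast_nonneg hP.le
  · simpa using mul_nonneg (mul_nonneg n.cast_nonneg hγ) hP.le
  · obtain ⟨τ, ρ, L, h, hle⟩ := exists_sharing_of_mem_binRateSet b hn hx
    exact hle.trans (h.sharingRate_le_sSup b hP)

end EightModes

theorem lti_capacity_eight_modes_general (a b : ℝ) (σ P γ : ℝ)
    (hP : 0 < P) (hγ : 0 < γ) (F : ℕ → ℝ)
    (hF : ∀ n : ℕ, 0 < n → F n = sSup {x : ℝ | ∃ (μ : Fin n → ℝ) (l : Fin n → ℂ),
      (∀ i, 0 ≤ μ i) ∧ (∑ i, μ i ≤ (n : ℝ) * P) ∧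
      (∑ i, (a ^ 2 * μ i + σ ^ 2) * ‖l i‖ ^ 2 ≤ (n : ℝ) * γ * P) ∧
      x = (1 / (2 * (n : ℝ))) * ∑ i, Real.log
        (1 + (μ i / σ ^ 2) * ‖1 + ((a * b : ℝ) : ℂ) * l i‖ ^ 2
          / (1 + b ^ 2 * ‖l i‖ ^ 2))}) :
    Tendsto F atTop (nhds (sSup {x : ℝ |
      ∃ (τ θ : Fin 8 → ℝ) (lb : Fin 7 → ℝ),
        (∀ j, 0 ≤ τ j) ∧ (∀ j, 0 ≤ θ j) ∧
        (∑ j, τ j = 1) ∧ (∑ j, θ j = 1) ∧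
        (∀ j, τ j = 0 → θ j = 0) ∧
        (∑ j : Fin 7, (lb j) ^ 2 * (a ^ 2 * θ j.succ * P + τ j.succ * σ ^ 2) ≤ γ * P) ∧
        x = τ 0 * ((1 / 2) * Real.log (1 + θ 0 * P / (τ 0 * σ ^ 2)))
          + ∑ j : Fin 7, τ j.succ * ((1 / 2) * Real.log
              (1 + (θ j.succ / τ j.succ) * (P / σ ^ 2)
                * (1 + a * b * lb j) ^ 2 / (1 + b ^ 2 * (lb j) ^ 2)))})) := by
  change Tendsto F atTop (nhds (sSup (eightModeRateSet a b σ P γ)))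
  replace hF : ∀ n, 0 < n → F n = sSup (binRateSet a b σ P γ n) := hF
  refine tendsto_order.2 ⟨fun v hv => ?_, fun v hv => ?_⟩
  · obtain ⟨x, hx, hvx⟩ := exists_lt_of_lt_csSup (eightModeRateSet_nonempty b hP hγ.le) hv
    obtain ⟨τ, ρ, L, h, rfl⟩ := exists_sharing_of_mem_eightModeRateSet b hP.le hx
    filter_upwards [h.eventually_lt_sSup_binRateSet b hvx, eventually_gt_atTop 0] with n hn hn0
    rwa [hF n hn0]
  · filter_upwards [eventually_gt_atTop 0] with n hn
    rw [hF n hn]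
    exact (sSup_binRateSet_le b hP hγ.le hn).trans_lt hv

/-- Corollary 1: for real channel coefficients with `ab ≠ 0`, the maximum `n`-bin
LTI relaying rate `Fₙ` converges to the 8-mode expression `C₈` with real
instantaneous amplify-and-forward gains. -/
theorem lti_capacity_eight_modes (a b : ℝ) (hab : a * b ≠ 0) (σ P γ : ℝ)
    (hσ : 0 < σ) (hP : 0 < P) (hγ : 0 < γ) (F : ℕ → ℝ)
    (hF : ∀ n : ℕ, 0 < n → F n = sSup {x : ℝ | ∃ (μ : Fin n → ℝ) (l : Fin n → ℂ),
      (∀ i, 0 ≤ μ i) ∧ (∑ i, μ i ≤ (n : ℝ) * P) ∧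
      (∑ i, (a ^ 2 * μ i + σ ^ 2) * ‖l i‖ ^ 2 ≤ (n : ℝ) * γ * P) ∧
      x = (1 / (2 * (n : ℝ))) * ∑ i, Real.log
        (1 + (μ i / σ ^ 2) * ‖1 + ((a * b : ℝ) : ℂ) * l i‖ ^ 2
          / (1 + b ^ 2 * ‖l i‖ ^ 2))}) :
    Tendsto F atTop (nhds (sSup {x : ℝ |
      ∃ (τ θ : Fin 8 → ℝ) (lb : Fin 7 → ℝ),
        (∀ j, 0 ≤ τ j) ∧ (∀ j, 0 ≤ θ j) ∧
        (∑ j, τ j = 1) ∧ (∑ j, θ j = 1) ∧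
        (∀ j, τ j = 0 → θ j = 0) ∧
        (∑ j : Fin 7, (lb j) ^ 2 * (a ^ 2 * θ j.succ * P + τ j.succ * σ ^ 2) ≤ γ * P) ∧
        x = τ 0 * ((1 / 2) * Real.log (1 + θ 0 * P / (τ 0 * σ ^ 2)))
          + ∑ j : Fin 7, τ j.succ * ((1 / 2) * Real.log
              (1 + (θ j.succ / τ j.succ) * (P / σ ^ 2)
                * (1 + a * b * lb j) ^ 2 / (1 + b ^ 2 * (lb j) ^ 2)))})) :=
  lti_capacity_eight_modes_general a b σ P γ hP hγ F hF
end
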